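/- arXiv:1707.01706 — 10 statements merged into one kernel-verified Lean document; each statement's English description precedes it below -/
import Mathlib

section
/- Let (a_j)_{j≥1} be a positive nondecreasing sequence with a_j → ∞, let (s_j)_{j≥1} be a positive sequence with s_j → 0, and let Q > 0, σ > 0. Then the functional J(r) := ∑_{j=1}^∞ min(r_j, σ²/s_j²) attains its supremum on the squared positive ellipsoid Θ₊²(a,Q): there exists r* ∈ Θ₊²(a,Q) such that J(r) ≤ J(r*) for all r ∈ Θ₊²(a,Q). -/
/-!
The maximiser is the water-filling profile: since `J` counts each coordinate only up to its
capacity `c j = σ² / s j²` while coordinate `j` costs `a j²` per unit, the cheapest coordinates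
come first, so `r*` fills the capacities `c 0, c 1, …` in order until the budget `Q²` is spent
(possible at a finite stage because `c j → ∞`). Optimality is a Lagrange-multiplier argument
with multiplier `a N²`, the cost of the last, partially filled coordinate `N`: for every
admissible `r`, with `d j = min (r j) (c j)`, one has `(a j² - a N²) (d j - r* j) ≥ 0` termwise.
-/

open Filter Finset

-- `Θ₊²(a, Q)` is `nonnegWeightedBall (fun j => a j ^ 2) (Q ^ 2)`.
def nonnegWeightedBall (w : ℕ → ℝ) (B : ℝ) : Set (ℕ → ℝ) :=
  {r | (∀ j, 0 ≤ r j) ∧ (Summable fun j => w j * r j) ∧ ∑' j, w j * r j ≤ B}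

theorem tsum_le_tsum_of_weighted_of_threshold {ι : Type*} {w x y : ι → ℝ} {μ : ℝ} (hμ : 0 < μ)
    (hx : Summable x) (hy : Summable y)
    (hwx : Summable fun i => w i * x i) (hwy : Summable fun i => w i * y i)
    (hbudget : ∑' i, w i * y i ≤ ∑' i, w i * x i)
    (hthreshold : ∀ i, 0 ≤ (w i - μ) * (y i - x i)) :
    ∑' i, y i ≤ ∑' i, x i := by
  have hsum := (hwy.hasSum.sub hwx.hasSum).sub ((hy.hasSum.sub hx.hasSum).mul_left μ)
  nlinarith [hsum.nonneg fun i => (hthreshold i).trans_eq (by ring)]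

theorem Summable.of_summable_mul_of_le {ι : Type*} {w r : ι → ℝ} {m : ℝ} (hm : 0 < m)
    (hmw : ∀ i, m ≤ w i) (hr : ∀ i, 0 ≤ r i) (h : Summable fun i => w i * r i) :
    Summable r :=
  (h.div_const m).of_nonneg_of_le hr fun i => by
    rw [le_div_iff₀ hm, mul_comm]
    exact mul_le_mul_of_nonneg_right (hmw i) (hr i)

theorem exists_le_lt_succ {F : ℕ → ℝ} {B : ℝ} (h0 : F 0 ≤ B) (h : ∃ n, B < F n) :
    ∃ N, F N ≤ B ∧ B < F (N + 1) := by
  classical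
  obtain ⟨N, hN⟩ : ∃ N, Nat.find h = N + 1 :=
    Nat.exists_eq_add_one.2 (Nat.pos_of_ne_zero fun h' => (Nat.find_spec h).not_ge (h' ▸ h0))
  exact ⟨N, not_lt.1 (Nat.find_min h (by omega)), hN ▸ Nat.find_spec h⟩

theorem exists_lt_sum_range_of_tendsto_atTop {f : ℕ → ℝ} (hf : ∀ j, 0 ≤ f j)
    (h : Tendsto f atTop atTop) (B : ℝ) : ∃ n, B < ∑ j ∈ range n, f j := by
  obtain ⟨M, hM⟩ := (h.eventually_gt_atTop B).exists
  exact ⟨M + 1, hM.trans_le (single_le_sum (fun j _ => hf j) (self_mem_range_succ M))⟩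

theorem tendsto_const_div_sq_atTop {α : Type*} {l : Filter α} {s : α → ℝ} {C : ℝ} (hC : 0 < C)
    (hs : Tendsto s l (nhds 0)) (hs0 : ∀ᶠ x in l, s x ≠ 0) :
    Tendsto (fun x => C / s x ^ 2) l atTop := by
  have hsq : Tendsto (fun x => s x ^ 2) l (nhdsWithin 0 (Set.Ioi 0)) :=
    tendsto_nhdsWithin_of_tendsto_nhds_of_eventually_within _ (by simpa using hs.pow 2)
      (hs0.mono fun x hx => sq_pos_of_ne_zero hx)
  simpa [div_eq_mul_inv] using hsq.inv_tendsto_nhdsGT_zero.const_mul_atTop hC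

section WaterFilling

variable {w c : ℕ → ℝ} {B : ℝ}

theorem exists_waterFilling (hw : ∀ j, 0 < w j) (hc : ∀ j, 0 ≤ c j) (hB : 0 ≤ B)
    (hcap : ∃ n, B < ∑ j ∈ range n, w j * c j) :
    ∃ N, ∃ x : ℕ → ℝ, (∀ j, 0 ≤ x j) ∧ (∀ j, x j ≤ c j) ∧ (∀ j < N, x j = c j) ∧
      (∀ j, N < j → x j = 0) ∧ HasSum (fun j => w j * x j) B := by
  obtain ⟨N, hFN, hFN1⟩ := exists_le_lt_succ (by simpa using hB) hcap
  rw [sum_range_succ] at hFN1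
  set t := (B - ∑ j ∈ range N, w j * c j) / w N with ht
  have ht0 : 0 ≤ t := div_nonneg (sub_nonneg.2 hFN) (hw N).le
  have htc : t ≤ c N := by rw [ht, div_le_iff₀ (hw N)]; linarith
  set x : ℕ → ℝ := fun j => if j < N then c j else if j = N then t else 0
  have hx_lt : ∀ j < N, x j = c j := fun j hj => if_pos hj
  have hx_N : x N = t := by simp [x]
  have hx_gt : ∀ j, N < j → x j = 0 := fun j hj => by simp [x, hj.not_gt, hj.ne']
  refine ⟨N, x, fun j => ?_, fun j => ?_, hx_lt, hx_gt, ?_⟩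
  · rcases lt_trichotomy j N with hj | rfl | hj
    exacts [hx_lt j hj ▸ hc j, hx_N ▸ ht0, (hx_gt j hj).symm.le]
  · rcases lt_trichotomy j N with hj | rfl | hj
    exacts [(hx_lt j hj).le, hx_N ▸ htc, hx_gt j hj ▸ hc j]
  · have hsum : ∑ j ∈ range (N + 1), w j * x j = B := by
      rw [sum_range_succ, sum_congr rfl fun j hj => by rw [hx_lt j (mem_range.1 hj)], hx_N, ht,
        mul_div_cancel₀ _ (hw N).ne']
      ring
    exact hsum ▸ hasSum_sum_of_ne_finset_zero fun j hj => by
      rw [hx_gt j (by simpa using hj), mul_zero]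

theorem exists_isMaxOn_tsum_min_nonnegWeightedBall (hw : ∀ j, 0 < w j) (hw_mono : Monotone w)
    (hc : ∀ j, 0 ≤ c j) (hB : 0 ≤ B) (hcap : ∃ n, B < ∑ j ∈ range n, w j * c j) :
    ∃ x ∈ nonnegWeightedBall w B,
      IsMaxOn (fun r => ∑' j, min (r j) (c j)) (nonnegWeightedBall w B) x := by
  obtain ⟨N, x, hx0, hxc, hx_lt, hx_gt, hx_sum⟩ := exists_waterFilling hw hc hB hcap
  have hx : Summable x := summable_of_ne_finset_zero (s := range (N + 1)) fun j hj =>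
    hx_gt j (by simpa using hj)
  refine ⟨x, ⟨hx0, hx_sum.summable, hx_sum.tsum_eq.le⟩, isMaxOn_iff.2 ?_⟩
  rintro r ⟨hr0, hwr, hwrB⟩
  have hmin_le : ∀ j, min (r j) (c j) ≤ r j := fun j => min_le_left _ _
  have hmin0 : ∀ j, 0 ≤ min (r j) (c j) := fun j => le_min (hr0 j) (hc j)
  have hwmin_le : ∀ j, w j * min (r j) (c j) ≤ w j * r j := fun j =>
    mul_le_mul_of_nonneg_left (hmin_le j) (hw j).le
  have hwmin : Summable fun j => w j * min (r j) (c j) :=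
    hwr.of_nonneg_of_le (fun j => mul_nonneg (hw j).le (hmin0 j)) hwmin_le
  have hr : Summable r := hwr.of_summable_mul_of_le (hw 0) (fun j => hw_mono j.zero_le) hr0
  simp only [min_eq_left (hxc _)]
  refine tsum_le_tsum_of_weighted_of_threshold (hw N) hx (hr.of_nonneg_of_le hmin0 hmin_le)
    hx_sum.summable hwmin ?_ fun j => ?_
  · calc ∑' j, w j * min (r j) (c j) ≤ ∑' j, w j * r j := hwmin.tsum_le_tsum hwmin_le hwr
      _ ≤ B := hwrB
      _ = ∑' j, w j * x j := hx_sum.tsum_eq.symm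
  · rcases lt_trichotomy j N with hj | rfl | hj
    · exact mul_nonneg_of_nonpos_of_nonpos (sub_nonpos.2 (hw_mono hj.le))
        (sub_nonpos.2 (hx_lt j hj ▸ min_le_right _ _))
    · simp
    · exact mul_nonneg (sub_nonneg.2 (hw_mono hj.le)) (by simp [hx_gt j hj, hmin0])

end WaterFilling

theorem J_attains_max_on_squared_ellipsoid_general
    (a : ℕ → ℝ) (ha_pos : ∀ j, 0 < a j) (ha_mono : Monotone a)
    (s : ℕ → ℝ) (hs_pos : ∀ j, 0 < s j)
    (hs_zero : Tendsto s atTop (nhds 0))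
    (Q : ℝ) (σ : ℝ) (hσ : 0 < σ) :
    ∃ rstar : ℕ → ℝ,
      ((∀ j, 0 ≤ rstar j) ∧ (Summable fun j => (a j) ^ 2 * rstar j) ∧
        (∑' j, (a j) ^ 2 * rstar j) ≤ Q ^ 2) ∧
      ∀ r : ℕ → ℝ,
        ((∀ j, 0 ≤ r j) ∧ (Summable fun j => (a j) ^ 2 * r j) ∧
          (∑' j, (a j) ^ 2 * r j) ≤ Q ^ 2) →
        (∑' j, min (r j) (σ ^ 2 / (s j) ^ 2))
          ≤ ∑' j, min (rstar j) (σ ^ 2 / (s j) ^ 2) := by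
  have ha_sq_mono : Monotone fun j => a j ^ 2 := fun i j hij =>
    pow_le_pow_left₀ (ha_pos i).le (ha_mono hij) 2
  have hc_top : Tendsto (fun j => σ ^ 2 / s j ^ 2) atTop atTop :=
    tendsto_const_div_sq_atTop (by positivity) hs_zero (.of_forall fun j => (hs_pos j).ne')
  have hcap : ∃ n, Q ^ 2 < ∑ j ∈ range n, a j ^ 2 * (σ ^ 2 / s j ^ 2) :=
    exists_lt_sum_range_of_tendsto_atTop (fun j => by positivity)
      (tendsto_atTop_mono (fun j => mul_le_mul_of_nonneg_right (ha_sq_mono j.zero_le)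
        (by positivity)) (hc_top.const_mul_atTop (by positivity [ha_pos 0]))) _
  obtain ⟨rstar, hmem, hmax⟩ := exists_isMaxOn_tsum_min_nonnegWeightedBall
    (fun j => by positivity [ha_pos j]) ha_sq_mono (fun j => by positivity) (sq_nonneg Q) hcap
  exact ⟨rstar, hmem, fun r hr => isMaxOn_iff.1 hmax r hr⟩

/-- the functional `J` attains its supremum on the squared positive
ellipsoid `Θ₊²(a,Q)`: there is `r* ∈ Θ₊²(a,Q)` with `J r ≤ J r*` for all
`r ∈ Θ₊²(a,Q)`. -/
theorem J_attains_max_on_squared_ellipsoid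
    (a : ℕ → ℝ) (ha_pos : ∀ j, 0 < a j) (ha_mono : Monotone a)
    (ha_top : Tendsto a atTop atTop)
    (s : ℕ → ℝ) (hs_pos : ∀ j, 0 < s j)
    (hs_zero : Tendsto s atTop (nhds 0))
    (Q : ℝ) (hQ : 0 < Q) (σ : ℝ) (hσ : 0 < σ) :
    ∃ rstar : ℕ → ℝ,
      ((∀ j, 0 ≤ rstar j) ∧ (Summable fun j => (a j) ^ 2 * rstar j) ∧
        (∑' j, (a j) ^ 2 * rstar j) ≤ Q ^ 2) ∧
      ∀ r : ℕ → ℝ,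
        ((∀ j, 0 ≤ r j) ∧ (Summable fun j => (a j) ^ 2 * r j) ∧
          (∑' j, (a j) ^ 2 * r j) ≤ Q ^ 2) →
        (∑' j, min (r j) (σ ^ 2 / (s j) ^ 2))
          ≤ ∑' j, min (rstar j) (σ ^ 2 / (s j) ^ 2) :=
  J_attains_max_on_squared_ellipsoid_general a ha_pos ha_mono s hs_pos hs_zero Q σ hσ
end

section
/- Let (a_j)_{j≥1} be a positive nondecreasing sequence with a_j → ∞, (s_j)_{j≥1} a positive sequence with s_j → 0, Q > 0, σ > 0, and set σ_j := 1/s_j. Let r* be a maximizer of J over Θ₊²(a,Q), and define P := {i : r*_i ≥ σ²σ_i²} and Q' := {i : r*_i = σ²σ_i²}. Then the set P is finite, and for every r ∈ Θ₊²(a,Q): ∑_{i ∉ P} r_i ≤ ∑_{i ∉ P} r*_i + σ² ∑_{i ∈ Q'} σ_i². -/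
/-!
The set `P` is finite because `a_i² r*_i → 0` (the weighted series converges) while
`a_i² σ²/s_i² → ∞`. For the inequality, `r*` maximizes `J` on the segment from `r*` to `r`,
which lies in the convex set `Θ₊²(a,Q)`, so the right derivative of `J` at `r*` in the
direction `r - r*` is `≤ 0`. By dominated convergence this derivative is the sum of the right
derivatives of `min (·) (σ²/s_i²)` at `r*_i`, namely `r_i - r*_i` off `P`, `0` on `P \ Q'` and
`min (r_i - r*_i) 0 ≥ -σ²/s_i²` on `Q'`.
-/

open Filter Set Topology
open scoped Classical

def sqPosEllipsoid {ι : Type*} (a : ι → ℝ) (Q : ℝ) : Set (ι → ℝ) :=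
  {r | (∀ j, 0 ≤ r j) ∧ (Summable fun j => a j ^ 2 * r j) ∧ ∑' j, a j ^ 2 * r j ≤ Q ^ 2}

lemma convex_sqPosEllipsoid {ι : Type*} (a : ι → ℝ) (Q : ℝ) : Convex ℝ (sqPosEllipsoid a Q) := by
  intro r ⟨hr0, hrs, hrQ⟩ r' ⟨hr0', hrs', hrQ'⟩ θ η hθ hη hθη
  have hweight : (fun j => a j ^ 2 * (θ • r + η • r') j)
      = fun j => θ * (a j ^ 2 * r j) + η * (a j ^ 2 * r' j) := by
    funext j; simp only [Pi.add_apply, Pi.smul_apply, smul_eq_mul]; ring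
  refine ⟨fun j => ?_, ?_, ?_⟩
  · simp only [Pi.add_apply, Pi.smul_apply, smul_eq_mul]
    have := hr0 j; have := hr0' j; positivity
  · rw [hweight]; exact (hrs.mul_left θ).add (hrs'.mul_left η)
  · rw [hweight, (hrs.mul_left θ).tsum_add (hrs'.mul_left η), tsum_mul_left, tsum_mul_left]
    calc θ * ∑' j, a j ^ 2 * r j + η * ∑' j, a j ^ 2 * r' j ≤ θ * Q ^ 2 + η * Q ^ 2 := by
          gcongr
      _ = Q ^ 2 := by rw [← add_mul, hθη, one_mul]

lemma summable_of_summable_sq_mul {a r : ℕ → ℝ} (ha0 : 0 < a 0) (ha : Monotone a)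
    (hr : ∀ j, 0 ≤ r j) (h : Summable fun j => a j ^ 2 * r j) : Summable r := by
  refine (h.mul_left (a 0 ^ 2)⁻¹).of_nonneg_of_le hr fun j => ?_
  rw [inv_mul_eq_div, le_div_iff₀ (by positivity), mul_comm]
  gcongr
  · exact hr j
  · exact ha (Nat.zero_le j)

lemma finite_setOf_le_of_tendsto {ι : Type*} {w c r : ι → ℝ} (hw : ∀ i, 0 ≤ w i)
    (hc : Tendsto (fun i => w i * c i) cofinite atTop)
    (hr : Tendsto (fun i => w i * r i) cofinite (𝓝 0)) : {i | c i ≤ r i}.Finite := by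
  have hlt : ∀ᶠ i in cofinite, r i < c i := by
    filter_upwards [hr.eventually_lt_const one_pos, hc.eventually_ge_atTop 1] with i h1 h2
    exact lt_of_mul_lt_mul_left (h1.trans_le h2) (hw i)
  simpa only [not_lt] using eventually_cofinite.mp hlt

lemma tendsto_sq_mul_div_sq_atTop {ι : Type*} {l : Filter ι} {a s : ι → ℝ} {σ : ℝ}
    (hσ : σ ≠ 0) (ha : Tendsto a l atTop) (hs_pos : ∀ i, 0 < s i) (hs : Tendsto s l (𝓝 0)) :
    Tendsto (fun i => a i ^ 2 * (σ ^ 2 / s i ^ 2)) l atTop := by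
  have hs_inv : Tendsto (fun i => (s i)⁻¹) l atTop :=
    (tendsto_nhdsWithin_of_tendsto_nhds_of_eventually_within _ hs
      (Eventually.of_forall hs_pos)).inv_tendsto_nhdsGT_zero
  refine (((tendsto_pow_atTop two_ne_zero).comp (ha.atTop_mul_atTop₀ hs_inv)).const_mul_atTop
    (sq_pos_of_ne_zero hσ)).congr fun i => ?_
  have := (hs_pos i).ne'
  simp only [Function.comp_apply]
  field_simp

noncomputable def minRightDeriv (c x d : ℝ) : ℝ :=
  if c ≤ x then (if x = c then min d 0 else 0) else d

section MinSlope

variable {c x d t : ℝ}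

lemma abs_minRightDeriv_le : |minRightDeriv c x d| ≤ |d| := by
  unfold minRightDeriv
  split_ifs
  · rcases le_total d 0 with h | h
    · rw [min_eq_left h]
    · rw [min_eq_right h, abs_zero]; exact abs_nonneg d
  · rw [abs_zero]; exact abs_nonneg d
  · exact le_rfl

lemma abs_slope_min_le (ht : 0 < t) : |t⁻¹ * (min (x + t * d) c - min x c)| ≤ |d| := by
  have h := abs_min_sub_min_le_max (x + t * d) c x c
  rw [sub_self, abs_zero, max_eq_left (abs_nonneg _), add_sub_cancel_left, abs_mul,
    abs_of_pos ht] at h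
  rw [abs_mul, abs_inv, abs_of_pos ht, inv_mul_le_iff₀ ht]
  exact h

lemma tendsto_slope_min (c x d : ℝ) :
    Tendsto (fun t => t⁻¹ * (min (x + t * d) c - min x c)) (𝓝[>] 0)
      (𝓝 (minRightDeriv c x d)) := by
  have hline : Tendsto (fun t => x + t * d) (𝓝[>] 0) (𝓝 x) := by
    have : Tendsto (fun t : ℝ => x + t * d) (𝓝 0) (𝓝 (x + 0 * d)) :=
      (continuous_const.add (continuous_id.mul continuous_const)).tendsto 0
    simpa using this.mono_left nhdsWithin_le_nhds
  rcases lt_trichotomy x c with hlt | rfl | hgt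
  · rw [minRightDeriv, if_neg hlt.not_ge]
    refine tendsto_const_nhds.congr' ?_
    filter_upwards [hline.eventually_lt_const hlt, self_mem_nhdsWithin] with t hxt ht
    rw [min_eq_left hxt.le, min_eq_left hlt.le, add_sub_cancel_left, inv_mul_cancel_left₀ ht.ne']
  · rw [minRightDeriv, if_pos le_rfl, if_pos rfl]
    refine tendsto_const_nhds.congr' ?_
    filter_upwards [self_mem_nhdsWithin] with t ht
    rw [min_self, ← min_sub_sub_right, add_sub_cancel_left, sub_self]
    nth_rw 2 [← mul_zero t]
    rw [← mul_min_of_nonneg _ _ ht.le, inv_mul_cancel_left₀ ht.ne']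
  · rw [minRightDeriv, if_pos hgt.le, if_neg hgt.ne']
    refine tendsto_const_nhds.congr' ?_
    filter_upwards [hline.eventually_const_lt hgt] with t hct
    rw [min_eq_right hct.le, min_eq_right hgt.le, sub_self, mul_zero]

end MinSlope

section FirstOrder

variable {ι : Type*} {c x r : ι → ℝ}

lemma tendsto_tsum_slope_min {d : ι → ℝ} (hd : Summable d) :
    Tendsto (fun t => ∑' i, t⁻¹ * (min (x i + t * d i) (c i) - min (x i) (c i))) (𝓝[>] 0)
      (𝓝 (∑' i, minRightDeriv (c i) (x i) (d i))) :=
  tendsto_tsum_of_dominated_convergence hd.abs (fun _ => tendsto_slope_min _ _ _)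
    (eventually_mem_nhdsWithin.mono fun _ ht _ => abs_slope_min_le ht)

lemma summable_min_of_nonneg (hc : ∀ i, 0 ≤ c i) (hx : ∀ i, 0 ≤ x i) (hxs : Summable x) :
    Summable fun i => min (x i) (c i) :=
  hxs.of_nonneg_of_le (fun i => le_min (hx i) (hc i)) fun _ => min_le_left _ _

lemma tsum_minRightDeriv_nonpos (hc : ∀ i, 0 ≤ c i) (hx : ∀ i, 0 ≤ x i) (hr : ∀ i, 0 ≤ r i)
    (hxs : Summable x) (hrs : Summable r)
    (hmax : ∀ t ∈ Ioo (0 : ℝ) 1,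
      ∑' i, min (x i + t * (r i - x i)) (c i) ≤ ∑' i, min (x i) (c i)) :
    ∑' i, minRightDeriv (c i) (x i) (r i - x i) ≤ 0 := by
  refine le_of_tendsto (tendsto_tsum_slope_min (hrs.sub hxs)) ?_
  filter_upwards [Ioo_mem_nhdsGT one_pos] with t ht
  have hseg : ∀ i, 0 ≤ x i + t * (r i - x i) := fun i => by
    have := hx i; have := hr i; nlinarith [ht.1, ht.2]
  have hseg_summ : Summable fun i => x i + t * (r i - x i) := hxs.add ((hrs.sub hxs).mul_left t)
  rw [tsum_mul_left, (summable_min_of_nonneg hc hseg hseg_summ).tsum_sub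
    (summable_min_of_nonneg hc hx hxs)]
  exact mul_nonpos_of_nonneg_of_nonpos (inv_nonneg.mpr ht.1.le) (sub_nonpos.mpr (hmax t ht))

lemma tsum_ite_le_of_tsum_minRightDeriv_nonpos (hc : ∀ i, 0 ≤ c i) (hr : ∀ i, 0 ≤ r i)
    (hxs : Summable x) (hrs : Summable r) (hP : {i | c i ≤ x i}.Finite)
    (h : ∑' i, minRightDeriv (c i) (x i) (r i - x i) ≤ 0) :
    ∑' i, (if c i ≤ x i then 0 else r i)
      ≤ ∑' i, (if c i ≤ x i then 0 else x i) + ∑' i, (if x i = c i then c i else 0) := by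
  have hA : Summable fun i => if c i ≤ x i then 0 else r i :=
    hrs.abs.of_norm_bounded fun _ => by split_ifs <;> simp
  have hB : Summable fun i => if c i ≤ x i then 0 else x i :=
    hxs.abs.of_norm_bounded fun _ => by split_ifs <;> simp
  have hD : Summable fun i => if x i = c i then c i else 0 := by
    refine summable_of_hasFiniteSupport (hP.subset fun i hi => ?_)
    by_contra hni
    exact hi (if_neg fun he => hni he.ge)
  have hL : Summable fun i => minRightDeriv (c i) (x i) (r i - x i) :=
    (hrs.sub hxs).abs.of_norm_bounded fun _ => abs_minRightDeriv_le
  have hpt : ∀ i, (if c i ≤ x i then 0 else r i) - (if c i ≤ x i then 0 else x i)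
      - (if x i = c i then c i else 0) ≤ minRightDeriv (c i) (x i) (r i - x i) := by
    intro i
    have := hr i
    have := hc i
    unfold minRightDeriv
    split_ifs <;> first | linarith | exact le_min (by linarith) (by linarith)
  have := ((hA.sub hB).sub hD).tsum_le_tsum hpt hL
  rw [(hA.sub hB).tsum_sub hD, hA.tsum_sub hB] at this
  linarith

end FirstOrder

-- Coordinate `i` here is coordinate `i + 1` of the paper.
theorem maximizer_tail_inequality_general
    (a : ℕ → ℝ) (ha_pos : ∀ j, 0 < a j) (ha_mono : Monotone a)
    (ha_top : Tendsto a atTop atTop)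
    (s : ℕ → ℝ) (hs_pos : ∀ j, 0 < s j)
    (hs_zero : Tendsto s atTop (nhds 0))
    (Q : ℝ) (σ : ℝ) (hσ : 0 < σ)
    (rstar : ℕ → ℝ)
    (hrstar_mem : (∀ j, 0 ≤ rstar j) ∧ (Summable fun j => (a j) ^ 2 * rstar j) ∧
      (∑' j, (a j) ^ 2 * rstar j) ≤ Q ^ 2)
    (hrstar_max : ∀ r : ℕ → ℝ,
      ((∀ j, 0 ≤ r j) ∧ (Summable fun j => (a j) ^ 2 * r j) ∧
        (∑' j, (a j) ^ 2 * r j) ≤ Q ^ 2) →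
      (∑' j, min (r j) (σ ^ 2 / (s j) ^ 2))
        ≤ ∑' j, min (rstar j) (σ ^ 2 / (s j) ^ 2)) :
    {i : ℕ | σ ^ 2 / (s i) ^ 2 ≤ rstar i}.Finite ∧
    ∀ r : ℕ → ℝ,
      ((∀ j, 0 ≤ r j) ∧ (Summable fun j => (a j) ^ 2 * r j) ∧
        (∑' j, (a j) ^ 2 * r j) ≤ Q ^ 2) →
      (∑' i, (if σ ^ 2 / (s i) ^ 2 ≤ rstar i then (0 : ℝ) else r i))
        ≤ (∑' i, (if σ ^ 2 / (s i) ^ 2 ≤ rstar i then (0 : ℝ) else rstar i))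
          + σ ^ 2 * ∑' i, (if rstar i = σ ^ 2 / (s i) ^ 2 then 1 / (s i) ^ 2 else 0) := by
  have hsumm : ∀ r ∈ sqPosEllipsoid a Q, Summable r := fun r hr =>
    summable_of_summable_sq_mul (ha_pos 0) ha_mono hr.1 hr.2.1
  have hP : {i : ℕ | σ ^ 2 / (s i) ^ 2 ≤ rstar i}.Finite := by
    refine finite_setOf_le_of_tendsto (w := fun i => a i ^ 2) (fun i => sq_nonneg _) ?_
      hrstar_mem.2.1.tendsto_cofinite_zero
    rw [Nat.cofinite_eq_atTop]
    exact tendsto_sq_mul_div_sq_atTop hσ.ne' ha_top hs_pos hs_zero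
  refine ⟨hP, fun r hr => ?_⟩
  have hderiv := tsum_minRightDeriv_nonpos (fun i => by positivity) hrstar_mem.1 hr.1
    (hsumm _ hrstar_mem) (hsumm r hr) fun t ht =>
      hrstar_max _ ((convex_sqPosEllipsoid a Q).add_smul_sub_mem hrstar_mem hr
        (Ioo_subset_Icc_self ht))
  have hQ' : ∑' i, (if rstar i = σ ^ 2 / s i ^ 2 then σ ^ 2 / s i ^ 2 else 0)
      = σ ^ 2 * ∑' i, (if rstar i = σ ^ 2 / (s i) ^ 2 then 1 / (s i) ^ 2 else 0) := by
    rw [← tsum_mul_left]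
    congr 1 with i
    split_ifs <;> ring
  rw [← hQ']
  exact tsum_ite_le_of_tsum_minRightDeriv_nonpos (fun i => by positivity) hr.1
    (hsumm _ hrstar_mem) (hsumm r hr) hP hderiv

/-- if `r*` maximizes `J` over `Θ₊²(a,Q)`, then `P = {i : r*_i ≥ σ²σ_i²}`
is finite, and for every `r ∈ Θ₊²(a,Q)`:
`∑_{i ∉ P} r_i ≤ ∑_{i ∉ P} r*_i + σ² ∑_{i ∈ Q'} σ_i²`. -/
theorem maximizer_tail_inequality
    (a : ℕ → ℝ) (ha_pos : ∀ j, 0 < a j) (ha_mono : Monotone a)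
    (ha_top : Tendsto a atTop atTop)
    (s : ℕ → ℝ) (hs_pos : ∀ j, 0 < s j)
    (hs_zero : Tendsto s atTop (nhds 0))
    (Q : ℝ) (hQ : 0 < Q) (σ : ℝ) (hσ : 0 < σ)
    (rstar : ℕ → ℝ)
    (hrstar_mem : (∀ j, 0 ≤ rstar j) ∧ (Summable fun j => (a j) ^ 2 * rstar j) ∧
      (∑' j, (a j) ^ 2 * rstar j) ≤ Q ^ 2)
    (hrstar_max : ∀ r : ℕ → ℝ,
      ((∀ j, 0 ≤ r j) ∧ (Summable fun j => (a j) ^ 2 * r j) ∧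
        (∑' j, (a j) ^ 2 * r j) ≤ Q ^ 2) →
      (∑' j, min (r j) (σ ^ 2 / (s j) ^ 2))
        ≤ ∑' j, min (rstar j) (σ ^ 2 / (s j) ^ 2)) :
    {i : ℕ | σ ^ 2 / (s i) ^ 2 ≤ rstar i}.Finite ∧
    ∀ r : ℕ → ℝ,
      ((∀ j, 0 ≤ r j) ∧ (Summable fun j => (a j) ^ 2 * r j) ∧
        (∑' j, (a j) ^ 2 * r j) ≤ Q ^ 2) →
      (∑' i, (if σ ^ 2 / (s i) ^ 2 ≤ rstar i then (0 : ℝ) else r i))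
        ≤ (∑' i, (if σ ^ 2 / (s i) ^ 2 ≤ rstar i then (0 : ℝ) else rstar i))
          + σ ^ 2 * ∑' i, (if rstar i = σ ^ 2 / (s i) ^ 2 then 1 / (s i) ^ 2 else 0) :=
  maximizer_tail_inequality_general a ha_pos ha_mono ha_top s hs_pos hs_zero Q σ hσ rstar hrstar_mem
    hrstar_max
end

section
/- Let (a_j)_{j≥1} be a positive nondecreasing sequence with a_j → ∞, (s_j)_{j≥1} a positive sequence with s_j → 0, Q > 0, σ > 0, σ_j := 1/s_j. Let r* ∈ Θ₊²(a,Q), define P := {i : r*_i ≥ σ²σ_i²} and Q' := {i : r*_i = σ²σ_i²}, and assume P is finite. Then for every r ∈ Θ₊²(a,Q), writing h := r − r*, the one-sided directional derivative of J at r* in direction h exists and equals lim_{t↓0} (J(r* + t h) − J(r*))/t = ∑_{i ∉ P} h_i − ∑_{i ∈ Q'} max(−h_i, 0). -/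
open Filter Topology
open scoped Classical

/-! Coordinatewise, `t ↦ min (x + t h) c` has a one-sided derivative at `0`, and its difference
quotients are bounded by `|h|` since `min · c` is 1-Lipschitz. As `a_j ≥ a_0 > 0`, points of the
ellipsoid are summable, so `|h|` is a summable majorant and dominated convergence for series
(Tannery's theorem) passes the coordinatewise limits through `J`. -/

theorem summable_of_summable_mul_of_le {β : Type*} {w f : β → ℝ} {m : ℝ} (hm : 0 < m)
    (hw : ∀ j, m ≤ w j) (hf : ∀ j, 0 ≤ f j) (hwf : Summable fun j => w j * f j) :
    Summable f := by
  refine (hwf.mul_left m⁻¹).of_nonneg_of_le hf fun j => ?_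
  calc f j = m⁻¹ * (m * f j) := by field_simp
    _ ≤ m⁻¹ * (w j * f j) := by gcongr; exacts [hf j, hw j]

theorem abs_min_add_mul_sub_min_div_le {x c h t : ℝ} (ht : 0 < t) :
    |(min (x + t * h) c - min x c) / t| ≤ |h| := by
  have h1 := abs_min_sub_min_le_max (x + t * h) c x c
  rw [add_sub_cancel_left, sub_self, abs_zero, max_eq_left (abs_nonneg _), abs_mul,
    abs_of_pos ht] at h1
  rwa [abs_div, abs_of_pos ht, div_le_iff₀' ht]

theorem min_add_mul_sub_min_div_eventuallyEq (x c h : ℝ) :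
    (fun t => (min (x + t * h) c - min x c) / t) =ᶠ[𝓝[>] 0]
      fun _ => (if c ≤ x then 0 else h) - (if x = c then max (-h) 0 else 0) := by
  have hcont : Tendsto (fun t : ℝ => x + t * h) (𝓝[>] 0) (𝓝 x) :=
    tendsto_nhdsWithin_of_tendsto_nhds <|
      (show Continuous fun t : ℝ => x + t * h by fun_prop).tendsto' 0 x (by simp)
  rcases lt_trichotomy x c with hxc | rfl | hxc
  · filter_upwards [self_mem_nhdsWithin, hcont.eventually (gt_mem_nhds hxc)]
      with t (ht : 0 < t) hlt
    simp [hxc.not_ge, hxc.ne, min_eq_left hlt.le, min_eq_left hxc.le, ht.ne']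
  · filter_upwards [self_mem_nhdsWithin] with t (ht : 0 < t)
    rcases le_total 0 h with hh | hh
    · simp [min_eq_right (le_add_of_nonneg_right (mul_nonneg ht.le hh)), hh]
    · rw [min_eq_left (add_le_of_nonpos_right (mul_nonpos_of_nonneg_of_nonpos ht.le hh))]
      simp [hh, ht.ne']
  · filter_upwards [hcont.eventually (lt_mem_nhds hxc)] with t hlt
    simp [hxc.le, hxc.ne', min_eq_right hlt.le]

theorem tendsto_tsum_min_add_mul_sub_div {β : Type*} {x c h : β → ℝ}
    (hxc : Summable fun i => min (x i) (c i)) (hh : Summable h) :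
    Tendsto (fun t => (∑' i, min (x i + t * h i) (c i) - ∑' i, min (x i) (c i)) / t) (𝓝[>] 0)
      (𝓝 (∑' i, (if c i ≤ x i then 0 else h i) -
        ∑' i, (if x i = c i then max (-h i) 0 else 0))) := by
  set q : ℝ → β → ℝ := fun t i => (min (x i + t * h i) (c i) - min (x i) (c i)) / t
  have hq_le : ∀ t > 0, ∀ i, ‖q t i‖ ≤ |h i| := fun t ht i =>
    abs_min_add_mul_sub_min_div_le ht
  have hquot : ∀ t > 0,
      (∑' i, min (x i + t * h i) (c i) - ∑' i, min (x i) (c i)) / t = ∑' i, q t i := by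
    intro t ht
    have hq : Summable (q t) := .of_norm_bounded hh.abs (hq_le t ht)
    have hmin : Summable fun i => min (x i + t * h i) (c i) :=
      ((hq.mul_right t).add hxc).congr fun i => by simp [q, ht.ne']
    rw [← hmin.tsum_sub hxc, ← tsum_div_const]
  have hg₁ : Summable fun i => if c i ≤ x i then 0 else h i :=
    .of_norm_bounded hh.abs fun i => by split_ifs <;> simp
  have hg₂ : Summable fun i => if x i = c i then max (-h i) 0 else 0 :=
    .of_norm_bounded hh.abs fun i => by
      split_ifs
      · exact (abs_of_nonneg (le_max_right _ _)).trans_le (max_le (neg_le_abs _) (abs_nonneg _))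
      · simp
  rw [← hg₁.tsum_sub hg₂]
  refine (tendsto_tsum_of_dominated_convergence (f := q) hh.abs
    (fun i => tendsto_const_nhds.congr' (min_add_mul_sub_min_div_eventuallyEq _ _ _).symm)
    (eventually_mem_nhdsWithin.mono fun t ht => hq_le t ht)).congr'
    (eventually_mem_nhdsWithin.mono fun t ht => (hquot t ht).symm)

/- Coordinate `i : ℕ` is coordinate `i + 1` of the paper and `σ²σ_i² = σ²/s_i²`; thus
`P = {i | σ²/s_i² ≤ r*_i}`, `Q' = {i | r*_i = σ²/s_i²}`, `h = r − r*`. -/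
theorem J_gateaux_derivative_general
    (a : ℕ → ℝ) (ha_pos : ∀ j, 0 < a j) (ha_mono : Monotone a)
    (s : ℕ → ℝ)
    (Q : ℝ) (σ : ℝ)
    (rstar : ℕ → ℝ)
    (hrstar_mem : (∀ j, 0 ≤ rstar j) ∧ (Summable fun j => (a j) ^ 2 * rstar j) ∧
      (∑' j, (a j) ^ 2 * rstar j) ≤ Q ^ 2)
    (r : ℕ → ℝ)
    (hr_mem : (∀ j, 0 ≤ r j) ∧ (Summable fun j => (a j) ^ 2 * r j) ∧
      (∑' j, (a j) ^ 2 * r j) ≤ Q ^ 2) :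
    Tendsto
      (fun t : ℝ =>
        ((∑' i, min (rstar i + t * (r i - rstar i)) (σ ^ 2 / (s i) ^ 2))
          - ∑' i, min (rstar i) (σ ^ 2 / (s i) ^ 2)) / t)
      (𝓝[>] 0)
      (𝓝 ((∑' i, (if σ ^ 2 / (s i) ^ 2 ≤ rstar i then (0 : ℝ) else r i - rstar i))
        - ∑' i, (if rstar i = σ ^ 2 / (s i) ^ 2
            then max (-(r i - rstar i)) 0 else 0))) := by
  have summable_of_mem : ∀ f : ℕ → ℝ, (∀ j, 0 ≤ f j) →
      (Summable fun j => a j ^ 2 * f j) → Summable f := fun f hf hsum =>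
    summable_of_summable_mul_of_le (pow_pos (ha_pos 0) 2)
      (fun j => pow_le_pow_left₀ (ha_pos 0).le (ha_mono j.zero_le) 2) hf hsum
  have hrstar := summable_of_mem rstar hrstar_mem.1 hrstar_mem.2.1
  have hr := summable_of_mem r hr_mem.1 hr_mem.2.1
  refine tendsto_tsum_min_add_mul_sub_div ?_ (hr.sub hrstar)
  exact hrstar.of_nonneg_of_le (fun i => le_min (hrstar_mem.1 i) (by positivity))
    fun i => min_le_left _ _

/-- for `r* ∈ Θ₊²(a,Q)` with `P` finite, and any `r ∈ Θ₊²(a,Q)`,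
writing `h = r − r*`, the one-sided directional derivative of `J` at `r*` in
direction `h` exists and equals `∑_{i ∉ P} h_i − ∑_{i ∈ Q'} (h_i)_-`. -/
theorem J_gateaux_derivative
    (a : ℕ → ℝ) (ha_pos : ∀ j, 0 < a j) (ha_mono : Monotone a)
    (ha_top : Tendsto a atTop atTop)
    (s : ℕ → ℝ) (hs_pos : ∀ j, 0 < s j)
    (hs_zero : Tendsto s atTop (nhds 0))
    (Q : ℝ) (hQ : 0 < Q) (σ : ℝ) (hσ : 0 < σ)
    (rstar : ℕ → ℝ)
    (hrstar_mem : (∀ j, 0 ≤ rstar j) ∧ (Summable fun j => (a j) ^ 2 * rstar j) ∧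
      (∑' j, (a j) ^ 2 * rstar j) ≤ Q ^ 2)
    (hP_fin : {i : ℕ | σ ^ 2 / (s i) ^ 2 ≤ rstar i}.Finite)
    (r : ℕ → ℝ)
    (hr_mem : (∀ j, 0 ≤ r j) ∧ (Summable fun j => (a j) ^ 2 * r j) ∧
      (∑' j, (a j) ^ 2 * r j) ≤ Q ^ 2) :
    Tendsto
      (fun t : ℝ =>
        ((∑' i, min (rstar i + t * (r i - rstar i)) (σ ^ 2 / (s i) ^ 2))
          - ∑' i, min (rstar i) (σ ^ 2 / (s i) ^ 2)) / t)
      (𝓝[>] 0)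
      (𝓝 ((∑' i, (if σ ^ 2 / (s i) ^ 2 ≤ rstar i then (0 : ℝ) else r i - rstar i))
        - ∑' i, (if rstar i = σ ^ 2 / (s i) ^ 2
            then max (-(r i - rstar i)) 0 else 0))) :=
  J_gateaux_derivative_general a ha_pos ha_mono s Q σ rstar hrstar_mem r hr_mem
end

section
/- Let (a_j)_{j≥1} be a positive nondecreasing sequence with a_j → ∞, (s_j)_{j≥1} a positive sequence with s_j → 0, Q > 0, σ > 0, σ_j := 1/s_j. Let r* be a maximizer of J over Θ₊²(a,Q) and set P := {i : r*_i ≥ σ²σ_i²}. Then for every r ∈ Θ₊²(a,Q): ∑_{i ∉ P} r_i + σ² ∑_{i ∈ P} σ_i² ≤ 2 J(r*); that is, the squared risk of the truncation estimator using the coordinate set P is at most twice the maximal value of J on the squared ellipsoid, uniformly over the ellipsoid. -/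
/-!
Write `c_j = σ²σ_j²` and `J* = J(r*)`. On `P` each term `σ²σ_i²` equals `min (r*_i) c_i`, so
that part of the risk is at most `J*`. Off `P` we have `r*_i < c_i`; moving from `min r* c`
towards the spike `(Q²/a_i²) e_i` keeps every coordinate below `c` for a while, and on that
segment `J` is affine with slope `Q²/a_i² - J*`. Maximality of `r*` forces `Q²/a_i² ≤ J*`,
i.e. `r_i ≤ (J*/Q²) a_i² r_i` off `P`, and summing over `r` in the ellipsoid bounds the rest
of the risk by `J*`.
-/

open Filter

/-- The paper's `Θ₊²(a,Q)` is `posEllipsoid (fun j => a j ^ 2) (Q ^ 2)`. -/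
def posEllipsoid (w : ℕ → ℝ) (B : ℝ) : Set (ℕ → ℝ) :=
  {r | (∀ j, 0 ≤ r j) ∧ Summable (fun j => w j * r j) ∧ ∑' j, w j * r j ≤ B}

/-- The paper's `J` is `clippedSum (fun j => σ ^ 2 * σ_j ^ 2)`. -/
noncomputable def clippedSum (c r : ℕ → ℝ) : ℝ := ∑' j, min (r j) (c j)

namespace posEllipsoid

variable {w r q : ℕ → ℝ} {B : ℝ}

theorem convex : Convex ℝ (posEllipsoid w B) := by
  rintro x ⟨hx0, hxs, hxB⟩ y ⟨hy0, hys, hyB⟩ α β hα hβ hαβ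
  have hcomb : (fun j => w j * (α • x + β • y) j)
      = fun j => α * (w j * x j) + β * (w j * y j) := by
    funext j
    simp only [Pi.add_apply, Pi.smul_apply, smul_eq_mul]
    ring
  refine ⟨fun j => add_nonneg (mul_nonneg hα (hx0 j)) (mul_nonneg hβ (hy0 j)), ?_, ?_⟩
  · rw [hcomb]
    exact (hxs.mul_left α).add (hys.mul_left β)
  · rw [hcomb, (hxs.mul_left α).tsum_add (hys.mul_left β), tsum_mul_left, tsum_mul_left]
    calc α * ∑' j, w j * x j + β * ∑' j, w j * y j ≤ α * B + β * B := by gcongr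
      _ = B := by rw [← add_mul, hαβ, one_mul]

theorem bound_nonneg (hr : r ∈ posEllipsoid w B) (hw : ∀ j, 0 ≤ w j) : 0 ≤ B :=
  (tsum_nonneg fun j => mul_nonneg (hw j) (hr.1 j)).trans hr.2.2

theorem mem_of_le (hr : r ∈ posEllipsoid w B) (hw : ∀ j, 0 ≤ w j) (hq : ∀ j, 0 ≤ q j)
    (hqr : ∀ j, q j ≤ r j) : q ∈ posEllipsoid w B := by
  have hle : ∀ j, w j * q j ≤ w j * r j := fun j => mul_le_mul_of_nonneg_left (hqr j) (hw j)
  have hqs : Summable fun j => w j * q j :=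
    hr.2.1.of_nonneg_of_le (fun j => mul_nonneg (hw j) (hq j)) hle
  exact ⟨hq, hqs, (hqs.tsum_le_tsum hle hr.2.1).trans hr.2.2⟩

theorem single_mem {i : ℕ} (hwi : 0 < w i) (hB : 0 ≤ B) :
    (Pi.single i (B / w i) : ℕ → ℝ) ∈ posEllipsoid w B := by
  have hweighted : (fun j => w j * (Pi.single i (B / w i) : ℕ → ℝ) j) = Pi.single i B := by
    funext j
    rcases eq_or_ne j i with rfl | hj
    · simp [mul_div_cancel₀ B hwi.ne']
    · simp [hj]
  refine ⟨fun j => ?_, ?_, ?_⟩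
  · rcases eq_or_ne j i with rfl | hj
    · simpa using div_nonneg hB hwi.le
    · simp [hj]
  · rw [hweighted]
    exact (hasSum_pi_single i B).summable
  · rw [hweighted, tsum_pi_single]

theorem summable {ε : ℝ} (hε : 0 < ε) (hw : ∀ j, ε ≤ w j) (hr : r ∈ posEllipsoid w B) :
    Summable r := by
  refine (hr.2.1.mul_left ε⁻¹).of_nonneg_of_le hr.1 fun j => ?_
  rw [le_inv_mul_iff₀ hε]
  exact mul_le_mul_of_nonneg_right (hw j) (hr.1 j)

end posEllipsoid

section clippedSum

variable {w c rstar : ℕ → ℝ} {B : ℝ}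

theorem clippedSum_nonneg (hc : ∀ j, 0 ≤ c j) (hr : ∀ j, 0 ≤ rstar j) :
    0 ≤ clippedSum c rstar :=
  tsum_nonneg fun j => le_min (hr j) (hc j)

theorem tsum_ite_le_clippedSum (hc : ∀ j, 0 ≤ c j) (hr : ∀ j, 0 ≤ rstar j)
    (hsum : Summable rstar) :
    ∑' i, (if c i ≤ rstar i then c i else 0) ≤ clippedSum c rstar := by
  have hle : ∀ i, (if c i ≤ rstar i then c i else 0) ≤ min (rstar i) (c i) := by
    intro i
    split_ifs with h
    · exact (min_eq_right h).ge
    · exact le_min (hr i) (hc i)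
  have hmin : Summable fun i => min (rstar i) (c i) :=
    hsum.of_nonneg_of_le (fun i => le_min (hr i) (hc i)) fun i => min_le_left _ _
  refine Summable.tsum_le_tsum hle (hmin.of_nonneg_of_le (fun i => ?_) hle) hmin
  split_ifs
  exacts [hc i, le_rfl]

theorem clippedSum_segment_single (hc : ∀ j, 0 ≤ c j) (hr : ∀ j, 0 ≤ rstar j)
    (hsum : Summable fun j => min (rstar j) (c j)) {i : ℕ} {M t : ℝ} (ht : 0 ≤ t)
    (hri : rstar i ≤ c i) (hti : (1 - t) * rstar i + t * M ≤ c i) :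
    clippedSum c ((1 - t) • (fun j => min (rstar j) (c j)) + t • (Pi.single i M : ℕ → ℝ))
      = (1 - t) * clippedSum c rstar + t * M := by
  have hle : ∀ j, (1 - t) * min (rstar j) (c j) + t * (Pi.single i M : ℕ → ℝ) j ≤ c j := by
    intro j
    rcases eq_or_ne j i with rfl | hj
    · simpa [min_eq_left hri] using hti
    · simp only [Pi.single_eq_of_ne hj, mul_zero, add_zero]
      nlinarith [min_le_right (rstar j) (c j), le_min (hr j) (hc j)]
  simp only [clippedSum, Pi.add_apply, Pi.smul_apply, smul_eq_mul, min_eq_left (hle _)]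
  rw [(hsum.mul_left _).tsum_add ((hasSum_pi_single i M).summable.mul_left t), tsum_mul_left,
    tsum_mul_left, tsum_pi_single]

theorem div_le_clippedSum_of_isMaxOn (hc : ∀ j, 0 ≤ c j) (hw : ∀ j, 0 < w j)
    (hrstar : rstar ∈ posEllipsoid w B) (hsum : Summable rstar)
    (hmax : IsMaxOn (clippedSum c) (posEllipsoid w B) rstar) {i : ℕ} (hi : rstar i < c i) :
    B / w i ≤ clippedSum c rstar := by
  have hr := hrstar.1
  have hB := posEllipsoid.bound_nonneg hrstar fun j => (hw j).le
  have hbK : (fun j => min (rstar j) (c j)) ∈ posEllipsoid w B :=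
    posEllipsoid.mem_of_le hrstar (fun j => (hw j).le) (fun j => le_min (hr j) (hc j))
      fun j => min_le_left _ _
  have hbsum : Summable fun j => min (rstar j) (c j) :=
    hsum.of_nonneg_of_le (fun j => le_min (hr j) (hc j)) fun j => min_le_left _ _
  set M := B / w i
  have hM : 0 ≤ M := div_nonneg hB (hw i).le
  have hri := hr i
  set t := (c i - rstar i) / (M + c i)
  have ht0 : 0 < t := div_pos (sub_pos.2 hi) (by linarith)
  have ht1 : t ≤ 1 := (div_le_one (by linarith)).2 (by linarith)
  have hti : (1 - t) * rstar i + t * M ≤ c i := by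
    have : t * (M + c i) = c i - rstar i := div_mul_cancel₀ _ (by linarith)
    nlinarith
  have hmem := posEllipsoid.convex hbK (posEllipsoid.single_mem (hw i) hB) (by linarith) ht0.le
    (sub_add_cancel 1 t)
  have hle := isMaxOn_iff.1 hmax _ hmem
  rw [clippedSum_segment_single hc hr hbsum ht0.le hi.le hti] at hle
  nlinarith

theorem tsum_ite_le_clippedSum_of_isMaxOn (hc : ∀ j, 0 ≤ c j) (hw : ∀ j, 0 < w j)
    (hB : 0 < B) (hrstar : rstar ∈ posEllipsoid w B) (hsum : Summable rstar)
    (hmax : IsMaxOn (clippedSum c) (posEllipsoid w B) rstar) {r : ℕ → ℝ}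
    (hr : r ∈ posEllipsoid w B) :
    ∑' i, (if c i ≤ rstar i then 0 else r i) ≤ clippedSum c rstar := by
  set J := clippedSum c rstar
  have hJ : 0 ≤ J / B := div_nonneg (clippedSum_nonneg hc hrstar.1) hB.le
  have hle : ∀ i, (if c i ≤ rstar i then 0 else r i) ≤ J / B * (w i * r i) := by
    intro i
    split_ifs with h
    · exact mul_nonneg hJ (mul_nonneg (hw i).le (hr.1 i))
    · have hspike := div_le_clippedSum_of_isMaxOn hc hw hrstar hsum hmax (not_le.1 h)
      rw [div_le_iff₀ (hw i)] at hspike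
      rw [div_mul_eq_mul_div, le_div_iff₀ hB]
      nlinarith [hr.1 i]
  have hsum' : Summable fun i => (if c i ≤ rstar i then 0 else r i) :=
    (hr.2.1.mul_left _).of_nonneg_of_le (fun i => by split_ifs; exacts [le_rfl, hr.1 i]) hle
  calc ∑' i, (if c i ≤ rstar i then 0 else r i)
      ≤ ∑' i, J / B * (w i * r i) := hsum'.tsum_le_tsum hle (hr.2.1.mul_left _)
    _ = J / B * ∑' i, w i * r i := tsum_mul_left
    _ ≤ J / B * B := mul_le_mul_of_nonneg_left hr.2.2 hJ
    _ = J := div_mul_cancel₀ _ hB.ne'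

end clippedSum

theorem truncation_risk_le_twice_J_max_general
    (a : ℕ → ℝ) (ha_pos : ∀ j, 0 < a j) (ha_mono : Monotone a)
    (s : ℕ → ℝ)
    (Q : ℝ) (hQ : 0 < Q) (σ : ℝ)
    (rstar : ℕ → ℝ)
    (hrstar_mem : (∀ j, 0 ≤ rstar j) ∧ (Summable fun j => (a j) ^ 2 * rstar j) ∧
      (∑' j, (a j) ^ 2 * rstar j) ≤ Q ^ 2)
    (hrstar_max : ∀ r : ℕ → ℝ,
      ((∀ j, 0 ≤ r j) ∧ (Summable fun j => (a j) ^ 2 * r j) ∧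
        (∑' j, (a j) ^ 2 * r j) ≤ Q ^ 2) →
      (∑' j, min (r j) (σ ^ 2 / (s j) ^ 2))
        ≤ ∑' j, min (rstar j) (σ ^ 2 / (s j) ^ 2)) :
    ∀ r : ℕ → ℝ,
      ((∀ j, 0 ≤ r j) ∧ (Summable fun j => (a j) ^ 2 * r j) ∧
        (∑' j, (a j) ^ 2 * r j) ≤ Q ^ 2) →
      (∑' i, (if σ ^ 2 / (s i) ^ 2 ≤ rstar i then (0 : ℝ) else r i))
        + σ ^ 2 * (∑' i, (if σ ^ 2 / (s i) ^ 2 ≤ rstar i then 1 / (s i) ^ 2 else 0))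
      ≤ 2 * ∑' j, min (rstar j) (σ ^ 2 / (s j) ^ 2) := by
  intro r hr
  have hc : ∀ j, 0 ≤ σ ^ 2 / s j ^ 2 := fun j => by positivity
  have hw : ∀ j, 0 < a j ^ 2 := fun j => pow_pos (ha_pos j) 2
  have hsum : Summable rstar := posEllipsoid.summable (hw 0)
    (fun j => pow_le_pow_left₀ (ha_pos 0).le (ha_mono (Nat.zero_le j)) 2) hrstar_mem
  have hmax : IsMaxOn (clippedSum fun j => σ ^ 2 / s j ^ 2)
      (posEllipsoid (fun j => a j ^ 2) (Q ^ 2)) rstar := isMaxOn_iff.2 hrstar_max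
  have hoff := tsum_ite_le_clippedSum_of_isMaxOn hc hw (pow_pos hQ 2) hrstar_mem hsum hmax hr
  have hon := tsum_ite_le_clippedSum hc hrstar_mem.1 hsum
  have hP : σ ^ 2 * ∑' i, (if σ ^ 2 / s i ^ 2 ≤ rstar i then 1 / s i ^ 2 else 0)
      = ∑' i, (if σ ^ 2 / s i ^ 2 ≤ rstar i then σ ^ 2 / s i ^ 2 else 0) := by
    rw [← tsum_mul_left]
    congr 1
    funext i
    split_ifs <;> simp only [mul_one_div, mul_zero]
  rw [hP, two_mul]
  exact add_le_add hoff hon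

/-- if `r*` maximizes `J` over `Θ₊²(a,Q)` and `P = {i : r*_i ≥ σ²σ_i²}`,
then for every `r ∈ Θ₊²(a,Q)`:
`∑_{i ∉ P} r_i + σ² ∑_{i ∈ P} σ_i² ≤ 2 J(r*)`. -/
theorem truncation_risk_le_twice_J_max
    (a : ℕ → ℝ) (ha_pos : ∀ j, 0 < a j) (ha_mono : Monotone a)
    (ha_top : Tendsto a atTop atTop)
    (s : ℕ → ℝ) (hs_pos : ∀ j, 0 < s j)
    (hs_zero : Tendsto s atTop (nhds 0))
    (Q : ℝ) (hQ : 0 < Q) (σ : ℝ) (hσ : 0 < σ)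
    (rstar : ℕ → ℝ)
    (hrstar_mem : (∀ j, 0 ≤ rstar j) ∧ (Summable fun j => (a j) ^ 2 * rstar j) ∧
      (∑' j, (a j) ^ 2 * rstar j) ≤ Q ^ 2)
    (hrstar_max : ∀ r : ℕ → ℝ,
      ((∀ j, 0 ≤ r j) ∧ (Summable fun j => (a j) ^ 2 * r j) ∧
        (∑' j, (a j) ^ 2 * r j) ≤ Q ^ 2) →
      (∑' j, min (r j) (σ ^ 2 / (s j) ^ 2))
        ≤ ∑' j, min (rstar j) (σ ^ 2 / (s j) ^ 2)) :
    ∀ r : ℕ → ℝ,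
      ((∀ j, 0 ≤ r j) ∧ (Summable fun j => (a j) ^ 2 * r j) ∧
        (∑' j, (a j) ^ 2 * r j) ≤ Q ^ 2) →
      (∑' i, (if σ ^ 2 / (s i) ^ 2 ≤ rstar i then (0 : ℝ) else r i))
        + σ ^ 2 * (∑' i, (if σ ^ 2 / (s i) ^ 2 ≤ rstar i then 1 / (s i) ^ 2 else 0))
      ≤ 2 * ∑' j, min (rstar j) (σ ^ 2 / (s j) ^ 2) :=
  truncation_risk_le_twice_J_max_general a ha_pos ha_mono s Q hQ σ rstar hrstar_mem hrstar_max
end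

section
/- Let (a_j)_{j≥1} be a positive nondecreasing sequence, (s_j)_{j≥1} a positive nonincreasing sequence, Q > 0, σ > 0. Then sup_{r ∈ Θ₊²(a,Q)} ∑_{j=1}^∞ min(r_j, σ²/s_j²) ≤ inf_{D ≥ 0} ( Q²/a_{D+1}² + σ² ∑_{j=1}^D 1/s_j² ); that is, the best truncation risk on any hyperrectangle contained in the ellipsoid is bounded by the best truncated-series risk on the ellipsoid. -/
/-! Fix a level `D`. Coordinates below `D` contribute at most `σ²/s_j²`, and for `j ≥ D`
monotonicity of `a` gives `min(r_j, σ²/s_j²) ≤ r_j ≤ a_j² r_j / a_D²`; summing, the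
coordinates from `D` on contribute at most `Q²/a_D²`. -/

open Finset

section WeightedTail

variable {r c w : ℕ → ℝ}

theorem min_le_ite_add_mul_div (hr : ∀ j, 0 ≤ r j) (hw_pos : ∀ j, 0 < w j)
    (hw : Monotone w) (D j : ℕ) :
    min (r j) (c j) ≤ (if j < D then c j else 0) + w j * r j / w D := by
  split_ifs with hjD
  · have : 0 ≤ w j * r j / w D := div_nonneg (mul_nonneg (hw_pos j).le (hr j)) (hw_pos D).le
    linarith [min_le_right (r j) (c j)]
  · have hrw : r j ≤ w j * r j / w D := by
      rw [le_div_iff₀ (hw_pos D), mul_comm]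
      exact mul_le_mul_of_nonneg_right (hw (not_lt.mp hjD)) (hr j)
    linarith [min_le_left (r j) (c j)]

theorem tsum_min_le_sum_add_tsum_mul_div (hr : ∀ j, 0 ≤ r j) (hc : ∀ j, 0 ≤ c j)
    (hw_pos : ∀ j, 0 < w j) (hw : Monotone w) (hwr : Summable fun j => w j * r j) (D : ℕ) :
    ∑' j, min (r j) (c j) ≤ ∑ j ∈ range D, c j + (∑' j, w j * r j) / w D := by
  have hhead : HasSum (fun j => if j < D then c j else 0) (∑ j ∈ range D, c j) := by
    have h : HasSum (fun j => if j < D then c j else 0)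
        (∑ j ∈ range D, if j < D then c j else 0) :=
      hasSum_sum_of_ne_finset_zero fun j hj => if_neg (by simpa using hj)
    rwa [sum_congr rfl fun j hj => if_pos (mem_range.mp hj)] at h
  have hmajor := hhead.add (hwr.hasSum.div_const (w D))
  have hle := min_le_ite_add_mul_div (c := c) hr hw_pos hw D
  have hsummable : Summable fun j => min (r j) (c j) :=
    hmajor.summable.of_nonneg_of_le (fun j => le_min (hr j) (hc j)) hle
  exact hasSum_le hle hsummable.hasSum hmajor

end WeightedTail

theorem sup_hyperrectangle_le_truncated_series_general
    (a : ℕ → ℝ) (ha_pos : ∀ j, 0 < a j) (ha_mono : Monotone a)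
    (s : ℕ → ℝ)
    (Q : ℝ) (σ : ℝ) :
    sSup {t : ℝ | ∃ r : ℕ → ℝ,
        ((∀ j, 0 ≤ r j) ∧ (Summable fun j => (a j) ^ 2 * r j) ∧
          (∑' j, (a j) ^ 2 * r j) ≤ Q ^ 2) ∧
        t = ∑' j, min (r j) (σ ^ 2 / (s j) ^ 2)}
    ≤ ⨅ D : ℕ, (Q ^ 2 / (a D) ^ 2 + σ ^ 2 * ∑ j ∈ Finset.range D, 1 / (s j) ^ 2) := by
  refine le_ciInf fun D => Real.sSup_le ?_ (by positivity)
  rintro t ⟨r, ⟨hr, hsum, hQ⟩, rfl⟩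
  have ha_sq_mono : Monotone fun j => a j ^ 2 := fun i j hij =>
    pow_le_pow_left₀ (ha_pos i).le (ha_mono hij) 2
  calc ∑' j, min (r j) (σ ^ 2 / s j ^ 2)
      ≤ ∑ j ∈ range D, σ ^ 2 / s j ^ 2 + (∑' j, a j ^ 2 * r j) / a D ^ 2 :=
        tsum_min_le_sum_add_tsum_mul_div hr (fun j => by positivity)
          (fun j => pow_pos (ha_pos j) 2) ha_sq_mono hsum D
    _ ≤ Q ^ 2 / a D ^ 2 + σ ^ 2 * ∑ j ∈ range D, 1 / s j ^ 2 := by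
        rw [mul_sum, add_comm]
        simp_rw [mul_one_div]
        gcongr

/-- the best truncation risk on any hyperrectangle contained in the
ellipsoid is bounded by the best truncated-series risk on the ellipsoid:
`sup_{r ∈ Θ₊²(a,Q)} ∑_j min(r_j, σ²/s_j²) ≤ inf_{D ≥ 0} ( Q²/a_{D+1}² + σ² ∑_{j=1}^D 1/s_j² )`. -/
theorem sup_hyperrectangle_le_truncated_series
    (a : ℕ → ℝ) (ha_pos : ∀ j, 0 < a j) (ha_mono : Monotone a)
    (s : ℕ → ℝ) (hs_pos : ∀ j, 0 < s j) (hs_anti : Antitone s)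
    (Q : ℝ) (hQ : 0 < Q) (σ : ℝ) (hσ : 0 < σ) :
    sSup {t : ℝ | ∃ r : ℕ → ℝ,
        ((∀ j, 0 ≤ r j) ∧ (Summable fun j => (a j) ^ 2 * r j) ∧
          (∑' j, (a j) ^ 2 * r j) ≤ Q ^ 2) ∧
        t = ∑' j, min (r j) (σ ^ 2 / (s j) ^ 2)}
    ≤ ⨅ D : ℕ, (Q ^ 2 / (a D) ^ 2 + σ ^ 2 * ∑ j ∈ Finset.range D, 1 / (s j) ^ 2) :=
  sup_hyperrectangle_le_truncated_series_general a ha_pos ha_mono s Q σ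
end

section
/- Let (a_j)_{j≥1} be a positive nondecreasing sequence with a_j → ∞, (s_j)_{j≥1} a positive nonincreasing sequence with s_j → 0, Q > 0, σ > 0. Then sup_{r ∈ Θ₊²(a,Q)} ∑_{j=1}^∞ min(r_j, σ²/s_j²) ≤ inf_{D ≥ 0} ( Q²/a_{D+1}² + σ² ∑_{j=1}^D 1/s_j² ) ≤ 2 · sup_{r ∈ Θ₊²(a,Q)} ∑_{j=1}^∞ min(r_j, σ²/s_j²); that is, the best truncated-series risk on the ellipsoid is determined, up to a factor 2, by the supremum over hyperrectangles contained in the ellipsoid of the best truncation risk on the hyperrectangle. -/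
/-!
Write `w j = a j ^ 2` and `c j = σ ^ 2 / s j ^ 2`. For `r` in the ellipsoid and any `D`, the term
`min (r j) (c j)` is at most `c j` below `D` and at most `w j * r j / w D` from `D` on, which gives
the first inequality. For the second, take the first `D` at which `∑_{j ≤ D} w j * c j` exceeds
`Q ^ 2`, and let `r` equal `c` below `D`, spend the remaining budget at `D` and vanish afterwards.
Then `∑' j, min (r j) (c j) = ∑_{j < D} c j + r D`, while monotonicity of `w` gives
`Q ^ 2 / w D = r D + (∑_{j < D} w j * c j) / w D ≤ r D + ∑_{j < D} c j`.
-/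

open Filter Finset Topology

theorem Nat.exists_le_lt_succ_of_le_of_lt {α : Type*} [LinearOrder α] {f : ℕ → α} {B : α}
    {n : ℕ} (h0 : f 0 ≤ B) (hn : B < f n) : ∃ D, f D ≤ B ∧ B < f (D + 1) := by
  by_contra! h
  exact hn.not_ge (Nat.rec h0 (fun k hk => h k hk) n)

theorem tsum_eq_sum_range_add_of_forall_gt {M : Type*} [AddCommMonoid M] [TopologicalSpace M]
    {f : ℕ → M} {D : ℕ} (hf : ∀ j, D < j → f j = 0) : ∑' j, f j = ∑ j ∈ range D, f j + f D := by
  rw [tsum_eq_sum (s := range (D + 1)) fun j hj => hf j (by simpa using hj), sum_range_succ]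

theorem tendsto_const_div_sq_atTop_s12 {s : ℕ → ℝ} (hs_pos : ∀ j, 0 < s j)
    (hs_zero : Tendsto s atTop (𝓝 0)) {σ : ℝ} (hσ : 0 < σ) :
    Tendsto (fun j => σ ^ 2 / s j ^ 2) atTop atTop := by
  have hsq : Tendsto (fun j => s j ^ 2) atTop (𝓝[>] 0) :=
    tendsto_nhdsWithin_iff.2
      ⟨by simpa using hs_zero.pow 2, Eventually.of_forall fun j => pow_pos (hs_pos j) 2⟩
  simpa only [div_eq_mul_inv, Function.comp_def] using
    (tendsto_inv_nhdsGT_zero.comp hsq).const_mul_atTop (pow_pos hσ 2)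

theorem Monotone.tendsto_mul_atTop {w c : ℕ → ℝ} (hw0 : 0 < w 0) (hw : Monotone w)
    (hc : Tendsto c atTop atTop) : Tendsto (fun j => w j * c j) atTop atTop := by
  refine tendsto_atTop_mono' _ ?_ (hc.const_mul_atTop hw0)
  filter_upwards [hc.eventually_ge_atTop 0] with j hj
  exact mul_le_mul_of_nonneg_right (hw (Nat.zero_le j)) hj

section Truncation

variable {w c r : ℕ → ℝ} {B : ℝ}

theorem tsum_min_le_div_add_sum (hw_pos : ∀ j, 0 < w j) (hw : Monotone w) (hc : ∀ j, 0 ≤ c j)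
    (hr : ∀ j, 0 ≤ r j) (hsum : Summable fun j => w j * r j) (hB : ∑' j, w j * r j ≤ B)
    (D : ℕ) : ∑' j, min (r j) (c j) ≤ B / w D + ∑ j ∈ range D, c j := by
  have hpt : ∀ j, min (r j) (c j) ≤ w j * r j / w D + (range D : Set ℕ).indicator c j := by
    intro j
    by_cases hj : j < D
    · have : 0 ≤ w j * r j / w D := div_nonneg (mul_nonneg (hw_pos j).le (hr j)) (hw_pos D).le
      simpa [hj] using (min_le_right _ _).trans (le_add_of_nonneg_left this)
    · have : r j ≤ w j * r j / w D := by
        rw [le_div_iff₀ (hw_pos D), mul_comm]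
        exact mul_le_mul_of_nonneg_right (hw (not_lt.1 hj)) (hr j)
      simpa [hj] using (min_le_left _ _).trans this
  have hfin : Summable ((range D : Set ℕ).indicator c) :=
    summable_of_ne_finset_zero (s := range D) fun j hj =>
      Set.indicator_of_notMem (by simpa using hj) c
  have hbound : Summable fun j => w j * r j / w D + (range D : Set ℕ).indicator c j :=
    (hsum.div_const _).add hfin
  calc ∑' j, min (r j) (c j)
      ≤ ∑' j, (w j * r j / w D + (range D : Set ℕ).indicator c j) :=
        (hbound.of_nonneg_of_le (fun j => le_min (hr j) (hc j)) hpt).tsum_le_tsum hpt hbound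
    _ = (∑' j, w j * r j) / w D + ∑ j ∈ range D, c j := by
        rw [(hsum.div_const _).tsum_add hfin, tsum_div_const, ← sum_eq_tsum_indicator]
    _ ≤ B / w D + ∑ j ∈ range D, c j := by
        gcongr
        exact (hw_pos D).le

theorem exists_sum_range_le_lt_sum_range_succ {g : ℕ → ℝ} (hg : ∀ j, 0 ≤ g j) (hB : 0 ≤ B)
    (hg_top : Tendsto g atTop atTop) :
    ∃ D, ∑ j ∈ range D, g j ≤ B ∧ B < ∑ j ∈ range (D + 1), g j := by
  obtain ⟨N, hN⟩ := (hg_top.eventually_gt_atTop B).exists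
  exact Nat.exists_le_lt_succ_of_le_of_lt (by simpa using hB)
    (hN.trans_le (single_le_sum (fun j _ => hg j) (self_mem_range_succ N)))

theorem exists_mem_ellipsoid_le_two_mul_tsum_min (hw_pos : ∀ j, 0 < w j) (hw : Monotone w)
    (hc : ∀ j, 0 ≤ c j) {D : ℕ} (hD : ∑ j ∈ range D, w j * c j ≤ B)
    (hD' : B < ∑ j ∈ range (D + 1), w j * c j) :
    ∃ r : ℕ → ℝ, ((∀ j, 0 ≤ r j) ∧ (Summable fun j => w j * r j) ∧ ∑' j, w j * r j ≤ B) ∧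
      B / w D + ∑ j ∈ range D, c j ≤ 2 * ∑' j, min (r j) (c j) := by
  set F := ∑ j ∈ range D, w j * c j
  set ρ := (B - F) / w D with hρ
  have hρ0 : 0 ≤ ρ := div_nonneg (sub_nonneg.2 hD) (hw_pos D).le
  have hρc : ρ ≤ c D := by
    rw [sum_range_succ] at hD'
    rw [div_le_iff₀' (hw_pos D)]
    linarith
  set r : ℕ → ℝ := fun j => if j < D then c j else if j = D then ρ else 0
  have hr_lt : ∀ j ∈ range D, r j = c j := fun j hj => if_pos (mem_range.1 hj)
  have hr_D : r D = ρ := by simp [r]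
  have hr_gt : ∀ j, D < j → r j = 0 := fun j hj => by simp [r, hj.not_gt, hj.ne']
  refine ⟨r, ⟨fun j => ?_, ?_, ?_⟩, ?_⟩
  · rcases lt_trichotomy j D with hj | rfl | hj
    · simpa [hr_lt j (mem_range.2 hj)] using hc j
    · rwa [hr_D]
    · rw [hr_gt j hj]
  · exact summable_of_ne_finset_zero (s := range (D + 1)) fun j hj => by
      rw [hr_gt j (by simpa using hj), mul_zero]
  · have hhead : ∑ j ∈ range D, w j * r j = F := sum_congr rfl fun j hj => by rw [hr_lt j hj]
    rw [tsum_eq_sum_range_add_of_forall_gt (f := fun j => w j * r j)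
      fun j hj => by rw [hr_gt j hj, mul_zero], hhead, hr_D, mul_div_cancel₀ _ (hw_pos D).ne']
    linarith
  · have hhead : ∑ j ∈ range D, min (r j) (c j) = ∑ j ∈ range D, c j :=
      sum_congr rfl fun j hj => by rw [hr_lt j hj, min_self]
    rw [tsum_eq_sum_range_add_of_forall_gt (f := fun j => min (r j) (c j))
      fun j hj => by rw [hr_gt j hj, min_eq_left (hc j)], hhead, hr_D, min_eq_left hρc]
    have hF : F / w D ≤ ∑ j ∈ range D, c j := by
      rw [sum_div]
      gcongr with j hj
      rw [div_le_iff₀ (hw_pos D), mul_comm (c j)]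
      exact mul_le_mul_of_nonneg_right (hw (mem_range.1 hj).le) (hc j)
    have hsplit : B / w D = F / w D + ρ := by
      rw [hρ, ← add_div, add_sub_cancel]
    linarith

end Truncation

theorem truncated_series_risk_two_sided_general
    (a : ℕ → ℝ) (ha_pos : ∀ j, 0 < a j) (ha_mono : Monotone a)
    (s : ℕ → ℝ) (hs_pos : ∀ j, 0 < s j)
    (hs_zero : Tendsto s atTop (nhds 0))
    (Q : ℝ) (σ : ℝ) (hσ : 0 < σ) :
    sSup {t : ℝ | ∃ r : ℕ → ℝ,
        ((∀ j, 0 ≤ r j) ∧ (Summable fun j => (a j) ^ 2 * r j) ∧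
          (∑' j, (a j) ^ 2 * r j) ≤ Q ^ 2) ∧
        t = ∑' j, min (r j) (σ ^ 2 / (s j) ^ 2)}
      ≤ (⨅ D : ℕ, (Q ^ 2 / (a D) ^ 2 + σ ^ 2 * ∑ j ∈ Finset.range D, 1 / (s j) ^ 2)) ∧
    (⨅ D : ℕ, (Q ^ 2 / (a D) ^ 2 + σ ^ 2 * ∑ j ∈ Finset.range D, 1 / (s j) ^ 2))
      ≤ 2 * sSup {t : ℝ | ∃ r : ℕ → ℝ,
          ((∀ j, 0 ≤ r j) ∧ (Summable fun j => (a j) ^ 2 * r j) ∧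
            (∑' j, (a j) ^ 2 * r j) ≤ Q ^ 2) ∧
          t = ∑' j, min (r j) (σ ^ 2 / (s j) ^ 2)} := by
  set S := {t : ℝ | ∃ r : ℕ → ℝ, ((∀ j, 0 ≤ r j) ∧ (Summable fun j => (a j) ^ 2 * r j) ∧
    (∑' j, (a j) ^ 2 * r j) ≤ Q ^ 2) ∧ t = ∑' j, min (r j) (σ ^ 2 / (s j) ^ 2)}
  have hw_pos : ∀ j, 0 < a j ^ 2 := fun j => pow_pos (ha_pos j) 2
  have hw : Monotone fun j => a j ^ 2 := fun i j hij =>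
    pow_le_pow_left₀ (ha_pos i).le (ha_mono hij) 2
  have hc : ∀ j, 0 ≤ σ ^ 2 / s j ^ 2 := fun j => by positivity
  simp_rw [mul_sum, mul_one_div]
  have hupper : ∀ t ∈ S, ∀ D : ℕ, t ≤ Q ^ 2 / a D ^ 2 + ∑ j ∈ range D, σ ^ 2 / s j ^ 2 := by
    rintro t ⟨r, ⟨hr, hsum, hB⟩, rfl⟩ D
    exact tsum_min_le_div_add_sum hw_pos hw hc hr hsum hB D
  have hne : S.Nonempty := ⟨0, 0, ⟨fun _ => le_rfl, by simp, by simp [sq_nonneg]⟩,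
    by simp [min_eq_left (hc _)]⟩
  refine ⟨csSup_le hne fun t ht => le_ciInf (hupper t ht), ?_⟩
  obtain ⟨D, hD, hD'⟩ := exists_sum_range_le_lt_sum_range_succ
    (fun j => mul_nonneg (hw_pos j).le (hc j)) (sq_nonneg Q)
    (hw.tendsto_mul_atTop (hw_pos 0) (tendsto_const_div_sq_atTop_s12 hs_pos hs_zero hσ))
  obtain ⟨r, hr, hJ⟩ := exists_mem_ellipsoid_le_two_mul_tsum_min hw_pos hw hc hD hD'
  calc ⨅ D : ℕ, (Q ^ 2 / a D ^ 2 + ∑ j ∈ range D, σ ^ 2 / s j ^ 2)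
      ≤ Q ^ 2 / a D ^ 2 + ∑ j ∈ range D, σ ^ 2 / s j ^ 2 :=
        ciInf_le ⟨0, by
          rintro _ ⟨D, rfl⟩
          exact add_nonneg (by positivity) (sum_nonneg fun j _ => hc j)⟩ D
    _ ≤ 2 * ∑' j, min (r j) (σ ^ 2 / s j ^ 2) := hJ
    _ ≤ 2 * sSup S := by
        gcongr
        exact le_csSup ⟨_, fun t ht => hupper t ht 0⟩ ⟨r, hr, rfl⟩

/-- the best truncated-series risk on the ellipsoid is determined, up
to a factor 2, by the supremum over hyperrectangles contained in the ellipsoid of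
the best truncation risk on the hyperrectangle:
`sup_{r ∈ Θ₊²(a,Q)} ∑_j min(r_j, σ²/s_j²) ≤ inf_{D ≥ 0} ( Q²/a_{D+1}² + σ² ∑_{j=1}^D 1/s_j² )
  ≤ 2 sup_{r ∈ Θ₊²(a,Q)} ∑_j min(r_j, σ²/s_j²)`. -/
theorem truncated_series_risk_two_sided
    (a : ℕ → ℝ) (ha_pos : ∀ j, 0 < a j) (ha_mono : Monotone a)
    (ha_top : Tendsto a atTop atTop)
    (s : ℕ → ℝ) (hs_pos : ∀ j, 0 < s j) (hs_anti : Antitone s)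
    (hs_zero : Tendsto s atTop (nhds 0))
    (Q : ℝ) (hQ : 0 < Q) (σ : ℝ) (hσ : 0 < σ) :
    sSup {t : ℝ | ∃ r : ℕ → ℝ,
        ((∀ j, 0 ≤ r j) ∧ (Summable fun j => (a j) ^ 2 * r j) ∧
          (∑' j, (a j) ^ 2 * r j) ≤ Q ^ 2) ∧
        t = ∑' j, min (r j) (σ ^ 2 / (s j) ^ 2)}
      ≤ (⨅ D : ℕ, (Q ^ 2 / (a D) ^ 2 + σ ^ 2 * ∑ j ∈ Finset.range D, 1 / (s j) ^ 2)) ∧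
    (⨅ D : ℕ, (Q ^ 2 / (a D) ^ 2 + σ ^ 2 * ∑ j ∈ Finset.range D, 1 / (s j) ^ 2))
      ≤ 2 * sSup {t : ℝ | ∃ r : ℕ → ℝ,
          ((∀ j, 0 ≤ r j) ∧ (Summable fun j => (a j) ^ 2 * r j) ∧
            (∑' j, (a j) ^ 2 * r j) ≤ Q ^ 2) ∧
          t = ∑' j, min (r j) (σ ^ 2 / (s j) ^ 2)} :=
  truncated_series_risk_two_sided_general a ha_pos ha_mono s hs_pos hs_zero Q σ hσ
end

section
/- Let φ : [0, ∞) → [0, ∞) be a continuous nondecreasing function with φ(0) = 0, and let (s_j)_{j≥1} be a positive nonincreasing sequence with s_j → 0 and φ(s_j²) > 0 for all j. Let σ > 0 and define the source-type squared ellipsoid R_φ := {r : ℕ≥1 → ℝ : r_j ≥ 0 for all j and ∑_{j=1}^∞ r_j/φ(s_j²)² ≤ 1}. Then sup_{r ∈ R_φ} ∑_{j=1}^∞ min(r_j, σ²/s_j²) ≤ inf_{D ≥ 0} ( φ(s_{D+1}²)² + σ² ∑_{j=1}^D 1/s_j² ) ≤ 2 · sup_{r ∈ R_φ} ∑_{j=1}^∞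 min(r_j, σ²/s_j²). -/
/-! With `w j = φ (s j ^ 2) ^ 2` and `b j = σ ^ 2 / s j ^ 2`, the ellipsoid is
`{r ≥ 0 : ∑ r j / w j ≤ 1}` and the truncation bound at level `D` is `w D + ∑_{j<D} b j`.

Upper bound: for `j < D` use `min (r j) (b j) ≤ b j`, and for `j ≥ D` use
`min (r j) (b j) ≤ r j ≤ w D * (r j / w j)` since `w` is antitone; summing, the tail costs at most
`w D`.

Lower bound: the vector `c • b` supported on the first `D + 1` coordinates, with
`c = min 1 (w D / ∑_{j≤D} b j)`, lies in the ellipsoid because `w j ≥ w D` there, so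
`min (w D) (∑_{j≤D} b j) ≤ S` for every `D`, where `S` is the supremum of the risks. Taking the
least `D` with `w D < S + ε` (it exists as `w → 0`), the previous level has `w > S`, hence
`∑_{j<D} b j ≤ S`, and the bound at level `D` is below `2 S + ε`. -/

open Filter Finset

section TruncationRisk

variable {w b : ℕ → ℝ}

def sqEllipsoid (w : ℕ → ℝ) : Set (ℕ → ℝ) :=
  {r | (∀ j, 0 ≤ r j) ∧ (Summable fun j => r j / w j) ∧ (∑' j, r j / w j) ≤ 1}

def truncationRisks (w b : ℕ → ℝ) : Set ℝ :=
  {t | ∃ r : ℕ → ℝ, r ∈ sqEllipsoid w ∧ t = ∑' j, min (r j) (b j)}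

def truncationBound (w b : ℕ → ℝ) (D : ℕ) : ℝ :=
  w D + ∑ j ∈ range D, b j

theorem tsum_min_le_truncationBound (hb : ∀ j, 0 ≤ b j) (hw_pos : ∀ j, 0 < w j)
    (hw_anti : Antitone w) {r : ℕ → ℝ} (hr : r ∈ sqEllipsoid w) (D : ℕ) :
    ∑' j, min (r j) (b j) ≤ truncationBound w b D := by
  obtain ⟨hr0, hsum, hle⟩ := hr
  set head : ℕ → ℝ := fun j => if j ∈ range D then b j else 0
  have head_zero : ∀ j ∉ range D, head j = 0 := fun j hj => if_neg hj
  have hbound : ∀ j, min (r j) (b j) ≤ head j + w D * (r j / w j) := by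
    intro j
    have hq : 0 ≤ r j / w j := div_nonneg (hr0 j) (hw_pos j).le
    by_cases hj : j ∈ range D
    · simp only [head, if_pos hj]
      linarith [min_le_right (r j) (b j), mul_nonneg (hw_pos D).le hq]
    · calc min (r j) (b j) ≤ r j := min_le_left _ _
        _ = w j * (r j / w j) := (mul_div_cancel₀ _ (hw_pos j).ne').symm
        _ ≤ w D * (r j / w j) :=
            mul_le_mul_of_nonneg_right (hw_anti (by simpa using hj)) hq
        _ = head j + w D * (r j / w j) := by rw [head_zero j hj, zero_add]
  have hsum' : Summable fun j => head j + w D * (r j / w j) :=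
    (summable_of_ne_finset_zero head_zero).add (hsum.mul_left _)
  calc ∑' j, min (r j) (b j) ≤ ∑' j, (head j + w D * (r j / w j)) :=
        (hsum'.of_nonneg_of_le (fun j => le_min (hr0 j) (hb j)) hbound).tsum_le_tsum hbound hsum'
    _ = ∑ j ∈ range D, b j + w D * ∑' j, r j / w j := by
        rw [(summable_of_ne_finset_zero head_zero).tsum_add (hsum.mul_left _), tsum_mul_left,
          tsum_eq_sum head_zero]
        exact congrArg (· + _) (sum_congr rfl fun j hj => if_pos hj)
    _ ≤ truncationBound w b D := by
        rw [truncationBound]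
        linarith [mul_le_mul_of_nonneg_left hle (hw_pos D).le]

theorem min_sum_range_succ_mem_truncationRisks (hb : ∀ j, 0 ≤ b j) (hw_pos : ∀ j, 0 < w j)
    (hw_anti : Antitone w) (D : ℕ) :
    min (w D) (∑ j ∈ range (D + 1), b j) ∈ truncationRisks w b := by
  set B := ∑ j ∈ range (D + 1), b j
  have hB0 : 0 ≤ B := sum_nonneg fun j _ => hb j
  set c := min 1 (w D / B)
  have hc0 : 0 ≤ c := le_min zero_le_one (div_nonneg (hw_pos D).le hB0)
  have hcB : c * B = min (w D) B := by
    rcases hB0.eq_or_lt with hB | hB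
    · rw [← hB, mul_zero, min_eq_right (hw_pos D).le]
    · rw [min_mul_of_nonneg _ _ hB.le, one_mul, div_mul_cancel₀ _ hB.ne', min_comm]
  set r : ℕ → ℝ := fun j => if j ∈ range (D + 1) then c * b j else 0
  have r_zero : ∀ j ∉ range (D + 1), r j = 0 := fun j hj => if_neg hj
  have r_nonneg : ∀ j, 0 ≤ r j := fun j => by
    unfold r; split_ifs
    exacts [mul_nonneg hc0 (hb j), le_rfl]
  have hmin : ∀ j, min (r j) (b j) = r j := fun j => min_eq_left <| by
    unfold r; split_ifs
    exacts [mul_le_of_le_one_left (hb j) (min_le_left _ _), hb j]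
  have hq_zero : ∀ j ∉ range (D + 1), r j / w j = 0 := fun j hj => by rw [r_zero j hj, zero_div]
  refine ⟨r, ⟨r_nonneg, summable_of_ne_finset_zero hq_zero, ?_⟩, ?_⟩
  · rw [tsum_eq_sum hq_zero]
    calc ∑ j ∈ range (D + 1), r j / w j ≤ ∑ j ∈ range (D + 1), c * b j / w D := by
          refine sum_le_sum fun j hj => ?_
          rw [show r j = c * b j from if_pos hj]
          exact div_le_div_of_nonneg_left (mul_nonneg hc0 (hb j)) (hw_pos D)
            (hw_anti (Nat.lt_succ_iff.mp (mem_range.mp hj)))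
      _ = min (w D) B / w D := by rw [← sum_div, ← mul_sum, hcB]
      _ ≤ 1 := (div_le_one (hw_pos D)).mpr (min_le_left _ _)
  · rw [tsum_congr hmin, tsum_eq_sum r_zero, ← hcB, mul_sum]
    exact sum_congr rfl fun j hj => (if_pos hj).symm

theorem bddAbove_truncationRisks (hb : ∀ j, 0 ≤ b j) (hw_pos : ∀ j, 0 < w j)
    (hw_anti : Antitone w) : BddAbove (truncationRisks w b) := by
  refine ⟨truncationBound w b 0, ?_⟩
  rintro _ ⟨r, hr, rfl⟩
  exact tsum_min_le_truncationBound hb hw_pos hw_anti hr 0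

theorem sSup_truncationRisks_le_iInf_truncationBound (hb : ∀ j, 0 ≤ b j)
    (hw_pos : ∀ j, 0 < w j) (hw_anti : Antitone w) :
    sSup (truncationRisks w b) ≤ ⨅ D, truncationBound w b D := by
  refine csSup_le ⟨_, min_sum_range_succ_mem_truncationRisks hb hw_pos hw_anti 0⟩ ?_
  rintro _ ⟨r, hr, rfl⟩
  exact le_ciInf (tsum_min_le_truncationBound hb hw_pos hw_anti hr)

theorem iInf_truncationBound_le_two_mul_sSup_truncationRisks (hb : ∀ j, 0 ≤ b j)
    (hw_pos : ∀ j, 0 < w j) (hw_anti : Antitone w) (hw_lim : Tendsto w atTop (nhds 0)) :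
    ⨅ D, truncationBound w b D ≤ 2 * sSup (truncationRisks w b) := by
  set S := sSup (truncationRisks w b)
  have hbdd := bddAbove_truncationRisks hb hw_pos hw_anti
  have hmem := min_sum_range_succ_mem_truncationRisks hb hw_pos hw_anti
  have hS0 : 0 ≤ S :=
    (le_min (hw_pos 0).le (sum_nonneg fun j _ => hb j)).trans (le_csSup hbdd (hmem 0))
  have head_le : ∀ D, S < w D → ∑ j ∈ range (D + 1), b j ≤ S := fun D hD =>
    (min_le_iff.mp (le_csSup hbdd (hmem D))).resolve_left hD.not_ge
  have hbddBelow : BddBelow (Set.range (truncationBound w b)) := by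
    refine ⟨0, ?_⟩
    rintro _ ⟨D, rfl⟩
    exact add_nonneg (hw_pos D).le (sum_nonneg fun j _ => hb j)
  refine le_of_forall_pos_lt_add fun ε hε => ?_
  have hex : ∃ D, w D < S + ε := (hw_lim.eventually (gt_mem_nhds (by linarith))).exists
  obtain ⟨D, hD, hmin⟩ : ∃ D, w D < S + ε ∧ ∀ k < D, S + ε ≤ w k :=
    ⟨Nat.find hex, Nat.find_spec hex, fun k hk => not_lt.mp (Nat.find_min hex hk)⟩
  have head : ∑ j ∈ range D, b j ≤ S := by
    rcases D with _ | k
    · simpa using hS0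
    · exact head_le k (by linarith [hmin k k.lt_succ_self])
  calc ⨅ D, truncationBound w b D ≤ truncationBound w b D := ciInf_le hbddBelow D
    _ < 2 * S + ε := by rw [truncationBound]; linarith

end TruncationRisk

theorem tendsto_comp_sq_of_continuousWithinAt {φ : ℝ → ℝ} {s : ℕ → ℝ}
    (hφ : ContinuousWithinAt φ (Set.Ici 0) 0) (hφ0 : φ 0 = 0) (hs : Tendsto s atTop (nhds 0)) :
    Tendsto (fun j => φ (s j ^ 2)) atTop (nhds 0) := by
  have hs_sq : Tendsto (fun j => s j ^ 2) atTop (nhdsWithin 0 (Set.Ici 0)) :=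
    tendsto_nhdsWithin_iff.mpr
      ⟨by simpa using hs.pow 2, Eventually.of_forall fun j => sq_nonneg (s j)⟩
  rw [ContinuousWithinAt, hφ0] at hφ
  exact hφ.comp hs_sq

/- Coordinate `j : ℕ` is coordinate `j + 1` of the paper: `s D` is `s_{D+1}` and `range D`
indexes `s_1, …, s_D`. -/
theorem source_set_risk_two_sided_general
    (φ : ℝ → ℝ)
    (hφ_cont : ContinuousOn φ (Set.Ici 0))
    (hφ_mono : MonotoneOn φ (Set.Ici 0))
    (hφ0 : φ 0 = 0)
    (s : ℕ → ℝ) (hs_anti : Antitone s)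
    (hs_zero : Tendsto s atTop (nhds 0))
    (hφs_pos : ∀ j, 0 < φ ((s j) ^ 2))
    (σ : ℝ) :
    sSup {t : ℝ | ∃ r : ℕ → ℝ,
        ((∀ j, 0 ≤ r j) ∧ (Summable fun j => r j / (φ ((s j) ^ 2)) ^ 2) ∧
          (∑' j, r j / (φ ((s j) ^ 2)) ^ 2) ≤ 1) ∧
        t = ∑' j, min (r j) (σ ^ 2 / (s j) ^ 2)}
      ≤ (⨅ D : ℕ, ((φ ((s D) ^ 2)) ^ 2 + σ ^ 2 * ∑ j ∈ Finset.range D, 1 / (s j) ^ 2)) ∧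
    (⨅ D : ℕ, ((φ ((s D) ^ 2)) ^ 2 + σ ^ 2 * ∑ j ∈ Finset.range D, 1 / (s j) ^ 2))
      ≤ 2 * sSup {t : ℝ | ∃ r : ℕ → ℝ,
          ((∀ j, 0 ≤ r j) ∧ (Summable fun j => r j / (φ ((s j) ^ 2)) ^ 2) ∧
            (∑' j, r j / (φ ((s j) ^ 2)) ^ 2) ≤ 1) ∧
          t = ∑' j, min (r j) (σ ^ 2 / (s j) ^ 2)} := by
  set w : ℕ → ℝ := fun j => φ (s j ^ 2) ^ 2
  set b : ℕ → ℝ := fun j => σ ^ 2 / s j ^ 2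
  have hs_nonneg : ∀ j, 0 ≤ s j := hs_anti.le_of_tendsto hs_zero
  have hb : ∀ j, 0 ≤ b j := fun j => by positivity
  have hw_pos : ∀ j, 0 < w j := fun j => pow_pos (hφs_pos j) 2
  have hw_anti : Antitone w := fun i j hij =>
    pow_le_pow_left₀ (hφs_pos j).le
      (hφ_mono (Set.mem_Ici.mpr (sq_nonneg _)) (Set.mem_Ici.mpr (sq_nonneg _))
        (pow_le_pow_left₀ (hs_nonneg j) (hs_anti hij) 2)) 2
  have hw_lim : Tendsto w atTop (nhds 0) := by
    simpa using (tendsto_comp_sq_of_continuousWithinAt (hφ_cont 0 Set.self_mem_Ici) hφ0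
      hs_zero).pow 2
  have hbound : ∀ D, φ (s D ^ 2) ^ 2 + σ ^ 2 * ∑ j ∈ range D, 1 / s j ^ 2
      = truncationBound w b D := fun D => by
    simp only [truncationBound, w, b, mul_sum, mul_one_div]
  simp only [hbound]
  exact ⟨sSup_truncationRisks_le_iInf_truncationBound hb hw_pos hw_anti,
    iInf_truncationBound_le_two_mul_sSup_truncationRisks hb hw_pos hw_anti hw_lim⟩

/-- for a general source condition given by an index function `φ`,
`sup_{r ∈ R_φ} ∑_j min(r_j, σ²/s_j²) ≤ inf_{D ≥ 0} ( φ(s_{D+1}²)² + σ² ∑_{j=1}^D 1/s_j² )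
  ≤ 2 sup_{r ∈ R_φ} ∑_j min(r_j, σ²/s_j²)`. -/
theorem source_set_risk_two_sided
    (φ : ℝ → ℝ)
    (hφ_cont : ContinuousOn φ (Set.Ici 0))
    (hφ_mono : MonotoneOn φ (Set.Ici 0))
    (hφ_nonneg : ∀ x ∈ Set.Ici (0 : ℝ), 0 ≤ φ x)
    (hφ0 : φ 0 = 0)
    (s : ℕ → ℝ) (hs_pos : ∀ j, 0 < s j) (hs_anti : Antitone s)
    (hs_zero : Tendsto s atTop (nhds 0))
    (hφs_pos : ∀ j, 0 < φ ((s j) ^ 2))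
    (σ : ℝ) (hσ : 0 < σ) :
    sSup {t : ℝ | ∃ r : ℕ → ℝ,
        ((∀ j, 0 ≤ r j) ∧ (Summable fun j => r j / (φ ((s j) ^ 2)) ^ 2) ∧
          (∑' j, r j / (φ ((s j) ^ 2)) ^ 2) ≤ 1) ∧
        t = ∑' j, min (r j) (σ ^ 2 / (s j) ^ 2)}
      ≤ (⨅ D : ℕ, ((φ ((s D) ^ 2)) ^ 2 + σ ^ 2 * ∑ j ∈ Finset.range D, 1 / (s j) ^ 2)) ∧
    (⨅ D : ℕ, ((φ ((s D) ^ 2)) ^ 2 + σ ^ 2 * ∑ j ∈ Finset.range D, 1 / (s j) ^ 2))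
      ≤ 2 * sSup {t : ℝ | ∃ r : ℕ → ℝ,
          ((∀ j, 0 ≤ r j) ∧ (Summable fun j => r j / (φ ((s j) ^ 2)) ^ 2) ∧
            (∑' j, r j / (φ ((s j) ^ 2)) ^ 2) ≤ 1) ∧
          t = ∑' j, min (r j) (σ ^ 2 / (s j) ^ 2)} :=
  source_set_risk_two_sided_general φ hφ_cont hφ_mono hφ0 s hs_anti hs_zero hφs_pos σ
end

section
/- Let p > 0, κ > 0 and Q > 0, and set a_j = j^κ and s_j = j^{−p} for j ≥ 1. Then there exist constants 0 < c ≤ C and σ₀ > 0 such that for all σ ∈ (0, σ₀): c · σ^{2κ/(κ + p + 1/2)} ≤ inf_{D ≥ 0} ( Q²/(D+1)^{2κ} + σ² ∑_{j=1}^D j^{2p} ) ≤ C · σ^{2κ/(κ + p + 1/2)}. -/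
/-!
Bias–variance balance. The bias `Q² / (D+1)^{2κ}` decreases and the variance
`σ² ∑_{j ≤ D} j^{2p}` is of order `σ² D^{2p+1}` (compare the sum with `∫ x^{2p}`).
At the level `T = σ^{-1/(κ+p+1/2)}` both are of order `σ^{2κ/(κ+p+1/2)}`: truncating at
`⌊T⌋` gives the upper bound, and every `D` has either `D + 1 ≤ T`, so that the bias alone is
large, or `T/2 ≤ D`, so that the variance alone is large.
-/

open Finset Real

lemma sum_range_succ_rpow_le {α : ℝ} (hα : 0 ≤ α) (D : ℕ) :
    ∑ j ∈ range D, ((j : ℝ) + 1) ^ α ≤ (D : ℝ) ^ (α + 1) :=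
  calc ∑ j ∈ range D, ((j : ℝ) + 1) ^ α ≤ ∑ _j ∈ range D, (D : ℝ) ^ α :=
        sum_le_sum fun j hj => rpow_le_rpow (by positivity)
          (by exact_mod_cast mem_range.1 hj) hα
    _ = (D : ℝ) ^ (α + 1) := by
        rw [sum_const, card_range, nsmul_eq_mul, rpow_add_one' (by positivity) (by linarith)]
        ring

lemma rpow_add_one_div_le_sum_range_succ_rpow {α : ℝ} (hα : 0 ≤ α) (D : ℕ) :
    (D : ℝ) ^ (α + 1) / (α + 1) ≤ ∑ j ∈ range D, ((j : ℝ) + 1) ^ α := by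
  have hmono : MonotoneOn (fun x : ℝ => x ^ α) (Set.Icc 0 (0 + D)) :=
    fun x hx _ _ hxy => rpow_le_rpow hx.1 hxy hα
  have := hmono.integral_le_sum
  rw [integral_rpow (Or.inl (by linarith))] at this
  simpa [zero_rpow (by linarith : α + 1 ≠ 0), add_comm] using this

noncomputable def truncRisk (Q κ p σ : ℝ) (D : ℕ) : ℝ :=
  Q ^ 2 / ((D : ℝ) + 1) ^ (2 * κ) + σ ^ 2 * ∑ j ∈ range D, ((j : ℝ) + 1) ^ (2 * p)

section truncRisk

variable {Q κ p σ : ℝ}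

lemma truncRisk_nonneg (D : ℕ) : 0 ≤ truncRisk Q κ p σ D := by
  unfold truncRisk; positivity

lemma truncRisk_floor_le (hκ : 0 ≤ κ) (hp : 0 ≤ p) {T : ℝ} (hT : 0 < T) :
    truncRisk Q κ p σ ⌊T⌋₊ ≤ Q ^ 2 / T ^ (2 * κ) + σ ^ 2 * T ^ (2 * p + 1) := by
  have hbias : Q ^ 2 / ((⌊T⌋₊ : ℝ) + 1) ^ (2 * κ) ≤ Q ^ 2 / T ^ (2 * κ) :=
    div_le_div_of_nonneg_left (sq_nonneg Q) (by positivity)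
      (rpow_le_rpow hT.le (Nat.lt_floor_add_one T).le (by positivity))
  have hvar : ∑ j ∈ range ⌊T⌋₊, ((j : ℝ) + 1) ^ (2 * p) ≤ T ^ (2 * p + 1) :=
    (sum_range_succ_rpow_le (by positivity) _).trans
      (rpow_le_rpow (by positivity) (Nat.floor_le hT.le) (by positivity))
  unfold truncRisk
  gcongr

lemma min_le_truncRisk (hκ : 0 ≤ κ) (hp : 0 ≤ p) {T : ℝ} (hT : 1 ≤ T) (D : ℕ) :
    min (Q ^ 2 / T ^ (2 * κ)) (σ ^ 2 * T ^ (2 * p + 1) / ((2 * p + 1) * 2 ^ (2 * p + 1)))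
      ≤ truncRisk Q κ p σ D := by
  unfold truncRisk
  rcases le_or_gt ((D : ℝ) + 1) T with hDT | hTD
  · refine (min_le_left _ _).trans (le_add_of_le_of_nonneg ?_ (by positivity))
    exact div_le_div_of_nonneg_left (sq_nonneg Q) (by positivity)
      (rpow_le_rpow (by positivity) hDT (by positivity))
  · have hD : (1 : ℝ) ≤ D := by
      rcases D with _ | D
      · norm_num at hTD; linarith
      · simp
    have hsum := rpow_add_one_div_le_sum_range_succ_rpow (by positivity : 0 ≤ 2 * p) D
    refine (min_le_right _ _).trans (le_add_of_nonneg_of_le (by positivity) ?_)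
    calc σ ^ 2 * T ^ (2 * p + 1) / ((2 * p + 1) * 2 ^ (2 * p + 1))
        = σ ^ 2 * ((T / 2) ^ (2 * p + 1) / (2 * p + 1)) := by
          rw [div_rpow (by positivity) zero_le_two]; field_simp
      _ ≤ σ ^ 2 * ((D : ℝ) ^ (2 * p + 1) / (2 * p + 1)) := by
          gcongr; linarith
      _ ≤ _ := by gcongr

end truncRisk

lemma rpow_neg_inv_rpow_two_mul {σ m : ℝ} (κ : ℝ) (hσ : 0 < σ) (hm : m ≠ 0) :
    (σ ^ (-m⁻¹)) ^ (2 * κ) = σ ^ (-(2 * κ / m)) := by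
  rw [← rpow_mul hσ.le]; congr 1; field_simp

lemma sq_mul_rpow_neg_inv_rpow {σ κ p m : ℝ} (hσ : 0 < σ) (hm : m ≠ 0)
    (hκ : 2 * κ = 2 * m - (2 * p + 1)) :
    σ ^ 2 * (σ ^ (-m⁻¹)) ^ (2 * p + 1) = σ ^ (2 * κ / m) := by
  rw [← rpow_mul hσ.le, ← rpow_natCast, ← rpow_add hσ, hκ]; congr 1; field_simp; ring

/-- for moderate smoothness `a_j = j^κ` and a moderately ill-posed
operator `s_j = j^{−p}`, the best truncated-series squared risk behaves like
`σ^{2κ/(κ+p+1/2)}` as `σ → 0`, up to constants. -/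
theorem rate_moderate_moderate
    (p κ Q : ℝ) (hp : 0 < p) (hκ : 0 < κ) (hQ : 0 < Q) :
    ∃ c C σ₀ : ℝ, 0 < c ∧ c ≤ C ∧ 0 < σ₀ ∧
      ∀ σ : ℝ, 0 < σ → σ < σ₀ →
        c * σ ^ (2 * κ / (κ + p + 1 / 2))
          ≤ (⨅ D : ℕ, (Q ^ 2 / ((D : ℝ) + 1) ^ (2 * κ)
              + σ ^ 2 * ∑ j ∈ Finset.range D, ((j : ℝ) + 1) ^ (2 * p))) ∧
        (⨅ D : ℕ, (Q ^ 2 / ((D : ℝ) + 1) ^ (2 * κ)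
              + σ ^ 2 * ∑ j ∈ Finset.range D, ((j : ℝ) + 1) ^ (2 * p)))
          ≤ C * σ ^ (2 * κ / (κ + p + 1 / 2)) := by
  set m := κ + p + 1 / 2
  have hm : 0 < m := by positivity
  set k := (2 * p + 1) * (2 : ℝ) ^ (2 * p + 1)
  refine ⟨min (Q ^ 2) k⁻¹, Q ^ 2 + 1, 1, lt_min (by positivity) (by positivity),
    (min_le_left _ _).trans (by linarith), one_pos, fun σ hσ hσ1 => ?_⟩
  set T := σ ^ (-m⁻¹)
  have hT : 1 ≤ T := one_le_rpow_of_pos_of_le_one_of_nonpos hσ hσ1.le (by simp [hm.le])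
  have hbias : Q ^ 2 / T ^ (2 * κ) = Q ^ 2 * σ ^ (2 * κ / m) := by
    rw [rpow_neg_inv_rpow_two_mul κ hσ hm.ne', rpow_neg hσ.le, div_inv_eq_mul]
  have hvar : σ ^ 2 * T ^ (2 * p + 1) = σ ^ (2 * κ / m) :=
    sq_mul_rpow_neg_inv_rpow hσ hm.ne' (by ring)
  change _ ≤ ⨅ D, truncRisk Q κ p σ D ∧ ⨅ D, truncRisk Q κ p σ D ≤ _
  constructor
  · refine le_ciInf fun D => le_of_eq_of_le ?_ (min_le_truncRisk hκ.le hp.le hT D)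
    rw [hbias, hvar, min_mul_of_nonneg _ _ (by positivity), inv_mul_eq_div]
  · refine (ciInf_le ⟨0, ?_⟩ ⌊T⌋₊).trans
      ((truncRisk_floor_le hκ.le hp.le (by positivity)).trans_eq ?_)
    · rintro _ ⟨D, rfl⟩; exact truncRisk_nonneg D
    · rw [hbias, hvar]; ring
end

section
/- Let p > 0, κ > 0 and Q > 0, and set a_j = j^κ and s_j = e^{−pj} for j ≥ 1. Then there exist constants 0 < c ≤ C and σ₀ > 0 such that for all σ ∈ (0, σ₀): c · (log(1/σ))^{−2κ} ≤ inf_{D ≥ 0} ( Q²/(D+1)^{2κ} + σ² ∑_{j=1}^D e^{2pj} ) ≤ C · (log(1/σ))^{−2κ}. -/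
/-!
Write `L = log (1/σ)`, so that `σ² = e^{-2L}`. Truncating at `D ≈ L/(2p)` makes the bias
`Q²/(D+1)^{2κ}` of order `L^{-2κ}` while the variance `σ² ∑_{j ≤ D} e^{2pj} ≲ L e^{-L}` is
negligible, which gives the upper bound. Conversely, any `D ≤ L/p` has bias at least a constant
times `L^{-2κ}`, while any `D > L/p` has variance at least `σ² e^{2pD} ≥ 1`.
-/

open Real Filter Finset Topology

noncomputable def truncationRisk (p κ Q σ : ℝ) (D : ℕ) : ℝ :=
  Q ^ 2 / ((D : ℝ) + 1) ^ (2 * κ) + σ ^ 2 * ∑ j ∈ range D, exp (2 * p * ((j : ℝ) + 1))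

lemma sum_range_exp_le_mul_exp {c : ℝ} (hc : 0 ≤ c) (D : ℕ) :
    ∑ j ∈ range D, exp (c * ((j : ℝ) + 1)) ≤ D * exp (c * D) :=
  calc ∑ j ∈ range D, exp (c * ((j : ℝ) + 1)) ≤ ∑ _j ∈ range D, exp (c * D) := by
        gcongr with j hj
        exact_mod_cast mem_range.mp hj
    _ = D * exp (c * D) := by simp

lemma exp_le_sum_range_exp (c : ℝ) {D : ℕ} (hD : D ≠ 0) :
    exp (c * D) ≤ ∑ j ∈ range D, exp (c * ((j : ℝ) + 1)) := by
  obtain ⟨n, rfl⟩ := Nat.exists_eq_succ_of_ne_zero hD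
  rw [sum_range_succ, Nat.cast_succ]
  exact le_add_of_nonneg_left (sum_nonneg fun _ _ => (exp_pos _).le)

lemma div_rpow_div_eq_mul_rpow_neg (Q : ℝ) {a L : ℝ} (ha : 0 < a) (hL : 0 < L) (t : ℝ) :
    Q / (L / a) ^ t = Q * a ^ t * L ^ (-t) := by
  rw [div_rpow hL.le ha.le, rpow_neg hL.le]
  field_simp

lemma eventually_mul_mul_exp_neg_le_rpow_neg (A t : ℝ) :
    ∀ᶠ L in atTop, A * (L * exp (-L)) ≤ L ^ (-t) := by
  have h := (tendsto_rpow_mul_exp_neg_mul_atTop_nhds_zero (1 + t) 1 one_pos).const_mul A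
  rw [mul_zero] at h
  filter_upwards [h.eventually_le_const one_pos, eventually_gt_atTop 0] with L hL hL0
  rw [rpow_add hL0, rpow_one, neg_one_mul] at hL
  calc A * (L * exp (-L)) = A * (L * L ^ t * exp (-L)) / L ^ t := by field_simp
    _ ≤ 1 / L ^ t := by gcongr
    _ = L ^ (-t) := by rw [rpow_neg hL0.le, one_div]

namespace truncationRisk

variable (p κ Q : ℝ)

lemma nonneg (σ : ℝ) (D : ℕ) : 0 ≤ truncationRisk p κ Q σ D := by
  unfold truncationRisk; positivity

variable {p κ}

lemma le_bias (hp : 0 < p) (hκ : 0 ≤ κ) {L : ℝ} (hpL : p ≤ L) {D : ℕ} (hD : (D : ℝ) ≤ L / p) :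
    Q ^ 2 * (p / 2) ^ (2 * κ) * L ^ (-(2 * κ)) ≤ Q ^ 2 / ((D : ℝ) + 1) ^ (2 * κ) := by
  have hL : 0 < L := hp.trans_le hpL
  have hD1 : (D : ℝ) + 1 ≤ L / (p / 2) := by
    have : 1 ≤ L / p := (one_le_div hp).mpr hpL
    rw [div_div_eq_mul_div, mul_div_right_comm]
    linarith
  rw [← div_rpow_div_eq_mul_rpow_neg _ (by positivity) hL]
  gcongr

lemma one_le_variance (hp : 0 < p) {L : ℝ} (hL : 0 ≤ L) {D : ℕ} (hD : L / p < D) :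
    1 ≤ exp (-L) ^ 2 * ∑ j ∈ range D, exp (2 * p * ((j : ℝ) + 1)) := by
  have hD0 : D ≠ 0 := by
    rintro rfl
    exact (div_nonneg hL hp.le).not_gt (by simpa using hD)
  have hLD : L < p * D := (div_lt_iff₀' hp).mp hD
  calc (1 : ℝ) = exp (-L) ^ 2 * exp (2 * L) := by
        rw [← exp_nat_mul, ← exp_add]; ring_nf; exact exp_zero.symm
    _ ≤ exp (-L) ^ 2 * exp (2 * p * D) := by gcongr exp (-L) ^ 2 * exp ?_; linarith
    _ ≤ exp (-L) ^ 2 * ∑ j ∈ range D, exp (2 * p * ((j : ℝ) + 1)) := by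
        gcongr; exact exp_le_sum_range_exp _ hD0

lemma min_mul_rpow_neg_le (hp : 0 < p) (hκ : 0 ≤ κ) {L : ℝ} (hL : 1 ≤ L) (hpL : p ≤ L) (D : ℕ) :
    min 1 (Q ^ 2 * (p / 2) ^ (2 * κ)) * L ^ (-(2 * κ)) ≤ truncationRisk p κ Q (exp (-L)) D := by
  have hLκ : L ^ (-(2 * κ)) ≤ 1 := rpow_le_one_of_one_le_of_nonpos hL (by linarith)
  have hLκ0 : 0 ≤ L ^ (-(2 * κ)) := by positivity
  unfold truncationRisk
  rcases le_or_gt (D : ℝ) (L / p) with hD | hD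
  · calc min 1 (Q ^ 2 * (p / 2) ^ (2 * κ)) * L ^ (-(2 * κ))
          ≤ Q ^ 2 * (p / 2) ^ (2 * κ) * L ^ (-(2 * κ)) := by gcongr; exact min_le_right _ _
      _ ≤ Q ^ 2 / ((D : ℝ) + 1) ^ (2 * κ) := le_bias Q hp hκ hpL hD
      _ ≤ _ := le_add_of_nonneg_right (by positivity)
  · calc min 1 (Q ^ 2 * (p / 2) ^ (2 * κ)) * L ^ (-(2 * κ)) ≤ 1 * 1 :=
          mul_le_mul (min_le_left _ _) hLκ hLκ0 zero_le_one
      _ ≤ exp (-L) ^ 2 * ∑ j ∈ range D, exp (2 * p * ((j : ℝ) + 1)) := by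
          rw [one_mul]; exact one_le_variance hp (by linarith) hD
      _ ≤ _ := le_add_of_nonneg_left (by positivity)

lemma bias_ceil_le (hp : 0 < p) (hκ : 0 ≤ κ) {L : ℝ} (hL : 0 < L) :
    Q ^ 2 / ((⌈L / (2 * p)⌉₊ : ℝ) + 1) ^ (2 * κ) ≤ Q ^ 2 * (2 * p) ^ (2 * κ) * L ^ (-(2 * κ)) := by
  rw [← div_rpow_div_eq_mul_rpow_neg _ (by positivity) hL]
  gcongr
  linarith [Nat.le_ceil (L / (2 * p))]

lemma variance_ceil_le (hp : 0 < p) {L : ℝ} (hL : 1 ≤ L) :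
    exp (-L) ^ 2 * ∑ j ∈ range ⌈L / (2 * p)⌉₊, exp (2 * p * ((j : ℝ) + 1))
      ≤ exp (2 * p) * (1 / (2 * p) + 1) * (L * exp (-L)) := by
  set D := ⌈L / (2 * p)⌉₊
  have hD : (D : ℝ) < L / (2 * p) + 1 := Nat.ceil_lt_add_one (by positivity)
  have hDL : (D : ℝ) ≤ (1 / (2 * p) + 1) * L := by
    rw [add_mul, one_div_mul_eq_div, one_mul]; linarith
  have hexp : 2 * p * D ≤ L + 2 * p :=
    calc 2 * p * D ≤ 2 * p * (L / (2 * p) + 1) := by gcongr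
      _ = L + 2 * p := by field_simp
  calc exp (-L) ^ 2 * ∑ j ∈ range D, exp (2 * p * ((j : ℝ) + 1))
      ≤ exp (-L) ^ 2 * (D * exp (2 * p * D)) := by
        gcongr; exact sum_range_exp_le_mul_exp (by positivity) D
    _ ≤ exp (-L) ^ 2 * ((1 / (2 * p) + 1) * L * exp (L + 2 * p)) := by gcongr
    _ = exp (2 * p) * (1 / (2 * p) + 1) * (L * exp (-L)) := by
        rw [exp_add, exp_neg]; field_simp

lemma eventually_bounds_iInf (hp : 0 < p) (hκ : 0 ≤ κ) :
    ∀ᶠ L in atTop,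
      min 1 (Q ^ 2 * (p / 2) ^ (2 * κ)) * L ^ (-(2 * κ)) ≤ ⨅ D, truncationRisk p κ Q (exp (-L)) D ∧
      ⨅ D, truncationRisk p κ Q (exp (-L)) D ≤ (Q ^ 2 * (2 * p) ^ (2 * κ) + 1) * L ^ (-(2 * κ)) := by
  filter_upwards [eventually_ge_atTop 1, eventually_ge_atTop p,
    eventually_mul_mul_exp_neg_le_rpow_neg (exp (2 * p) * (1 / (2 * p) + 1)) (2 * κ)]
    with L hL hpL hvariance
  have hbdd : BddBelow (Set.range (truncationRisk p κ Q (exp (-L)))) :=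
    ⟨0, by rintro _ ⟨D, rfl⟩; exact nonneg p κ Q _ D⟩
  refine ⟨le_ciInf (min_mul_rpow_neg_le Q hp hκ hL hpL), (ciInf_le hbdd ⌈L / (2 * p)⌉₊).trans ?_⟩
  rw [add_one_mul]
  exact add_le_add (bias_ceil_le Q hp hκ (by linarith)) ((variance_ceil_le hp hL).trans hvariance)

end truncationRisk

/-- for moderate smoothness `a_j = j^κ` and a severely ill-posed
operator `s_j = e^{−pj}`, the best truncated-series squared risk behaves like
`(log(1/σ))^{−2κ}` as `σ → 0`, up to constants. -/
theorem rate_moderate_severe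
    (p κ Q : ℝ) (hp : 0 < p) (hκ : 0 < κ) (hQ : 0 < Q) :
    ∃ c C σ₀ : ℝ, 0 < c ∧ c ≤ C ∧ 0 < σ₀ ∧
      ∀ σ : ℝ, 0 < σ → σ < σ₀ →
        c * (Real.log (1 / σ)) ^ (-(2 * κ))
          ≤ (⨅ D : ℕ, (Q ^ 2 / ((D : ℝ) + 1) ^ (2 * κ)
              + σ ^ 2 * ∑ j ∈ Finset.range D, Real.exp (2 * p * ((j : ℝ) + 1)))) ∧
        (⨅ D : ℕ, (Q ^ 2 / ((D : ℝ) + 1) ^ (2 * κ)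
              + σ ^ 2 * ∑ j ∈ Finset.range D, Real.exp (2 * p * ((j : ℝ) + 1))))
          ≤ C * (Real.log (1 / σ)) ^ (-(2 * κ)) := by
  have hlog : Tendsto (fun σ => log (1 / σ)) (𝓝[>] 0) atTop := by
    simp only [one_div]
    exact tendsto_log_atTop.comp tendsto_inv_nhdsGT_zero
  obtain ⟨σ₀, hσ₀, hbounds⟩ := mem_nhdsGT_iff_exists_Ioo_subset.mp
    (hlog.eventually (truncationRisk.eventually_bounds_iInf Q hp hκ.le))
  refine ⟨min 1 (Q ^ 2 * (p / 2) ^ (2 * κ)), Q ^ 2 * (2 * p) ^ (2 * κ) + 1, σ₀, by positivity,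
    (min_le_left _ _).trans (le_add_of_nonneg_left (by positivity)), hσ₀, fun σ hσ hσσ₀ => ?_⟩
  have hσ_eq : exp (-log (1 / σ)) = σ := by rw [exp_neg, exp_log (by positivity), one_div, inv_inv]
  have h := hbounds ⟨hσ, hσσ₀⟩
  rw [Set.mem_ofPred_eq, hσ_eq] at h
  exact h
end

section
/- Let p > 0, κ > 0 and Q > 0, and set a_j = e^{κj} and s_j = j^{−p} for j ≥ 1. Then there exist constants 0 < c ≤ C and σ₀ > 0 such that for all σ ∈ (0, σ₀): c · σ² (log(1/σ))^{2p+1} ≤ inf_{D ≥ 0} ( Q² e^{−2κ(D+1)} + σ² ∑_{j=1}^D j^{2p} ) ≤ C · σ² (log(1/σ))^{2p+1}. -/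
/-!
Write `σ = e^{-L}` with `L = log (1/σ)`. Truncating at `D ≈ L/κ` makes the bias `Q² e^{-2κ(D+1)}`
at most `Q² σ²`, while the variance `σ² ∑_{j ≤ D} j^{2p}` is at most `σ² D^{2p+1} ≲ σ² L^{2p+1}`.
Conversely, a level `D + 1 < L/(2κ)` leaves a bias of at least `Q² σ`, and `σ L^{2p+1} → 0`;
a level `D + 1 ≥ L/(2κ)` has variance at least `σ² (D/2)^{2p+1} ≳ σ² L^{2p+1}`, counting only the
upper half of the terms.
-/

open Real Finset Filter

namespace TruncatedSeries

/-- Squared bias plus variance of the estimator truncated at level `D`. -/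
noncomputable def risk (p κ Q σ : ℝ) (D : ℕ) : ℝ :=
  Q ^ 2 * exp (-(2 * κ) * ((D : ℝ) + 1)) + σ ^ 2 * ∑ j ∈ range D, ((j : ℝ) + 1) ^ (2 * p)

lemma sum_range_succ_rpow_nonneg (q : ℝ) (D : ℕ) : 0 ≤ ∑ j ∈ range D, ((j : ℝ) + 1) ^ q :=
  sum_nonneg fun _ _ ↦ rpow_nonneg (by positivity) _

lemma sum_range_succ_rpow_le {q : ℝ} (hq : 0 ≤ q) (D : ℕ) :
    ∑ j ∈ range D, ((j : ℝ) + 1) ^ q ≤ (D : ℝ) ^ (q + 1) := by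
  have hterm : ∀ j ∈ range D, ((j : ℝ) + 1) ^ q ≤ (D : ℝ) ^ q := fun j hj ↦
    rpow_le_rpow (by positivity) (by exact_mod_cast mem_range.1 hj) hq
  calc ∑ j ∈ range D, ((j : ℝ) + 1) ^ q ≤ D * (D : ℝ) ^ q := by
        simpa using sum_le_card_nsmul _ _ _ hterm
    _ = (D : ℝ) ^ (q + 1) := by rw [rpow_add_one' (by positivity) (by linarith)]; ring

lemma half_rpow_le_sum_range_succ_rpow {q : ℝ} (hq : 0 ≤ q) (D : ℕ) :
    ((D : ℝ) / 2) ^ (q + 1) ≤ ∑ j ∈ range D, ((j : ℝ) + 1) ^ q := by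
  have hterm : ∀ j ∈ Ico (D / 2) D, ((D : ℝ) / 2) ^ q ≤ ((j : ℝ) + 1) ^ q := by
    intro j hj
    have hD : D ≤ (j + 1) * 2 := by have := (mem_Ico.1 hj).1; omega
    exact rpow_le_rpow (by positivity) (by rw [div_le_iff₀ two_pos]; exact_mod_cast hD) hq
  have hcard : (D : ℝ) / 2 ≤ #(Ico (D / 2) D) := by
    rw [Nat.card_Ico, div_le_iff₀ two_pos]; exact_mod_cast (by omega : D ≤ (D - D / 2) * 2)
  calc ((D : ℝ) / 2) ^ (q + 1) = (D / 2) * ((D : ℝ) / 2) ^ q := by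
        rw [rpow_add_one' (by positivity) (by linarith)]; ring
    _ ≤ #(Ico (D / 2) D) * ((D : ℝ) / 2) ^ q := by gcongr
    _ ≤ ∑ j ∈ Ico (D / 2) D, ((j : ℝ) + 1) ^ q := by simpa using card_nsmul_le_sum _ _ _ hterm
    _ ≤ ∑ j ∈ range D, ((j : ℝ) + 1) ^ q :=
        sum_le_sum_of_subset_of_nonneg (fun j hj ↦ mem_range.2 (mem_Ico.1 hj).2)
          fun _ _ _ ↦ rpow_nonneg (by positivity) _

section

variable {p κ Q σ L : ℝ}

lemma risk_nonneg (D : ℕ) : 0 ≤ risk p κ Q σ D := by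
  have hvar := sum_range_succ_rpow_nonneg (2 * p) D
  unfold risk; positivity

lemma mul_le_risk_of_le (hσ : σ = exp (-L)) {D : ℕ} (hD : 2 * κ * (D + 1) ≤ L) :
    Q ^ 2 * σ ≤ risk p κ Q σ D := by
  have hbias : Q ^ 2 * σ ≤ Q ^ 2 * exp (-(2 * κ) * ((D : ℝ) + 1)) := by
    rw [hσ]; gcongr; linarith
  have hvar := sum_range_succ_rpow_nonneg (2 * p) D
  unfold risk; nlinarith

lemma rpow_mul_le_risk_of_lt (hp : 0 ≤ p) (hκ : 0 < κ) (hL : 4 * κ ≤ L) {D : ℕ}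
    (hD : L < 2 * κ * (D + 1)) :
    σ ^ 2 * ((8 * κ)⁻¹ ^ (2 * p + 1) * L ^ (2 * p + 1)) ≤ risk p κ Q σ D := by
  have hLD : L / (8 * κ) ≤ (D : ℝ) / 2 := by
    rw [div_le_div_iff₀ (by positivity) two_pos]; nlinarith
  have hvar : (8 * κ)⁻¹ ^ (2 * p + 1) * L ^ (2 * p + 1) ≤ ∑ j ∈ range D, ((j : ℝ) + 1) ^ (2 * p) :=
    calc (8 * κ)⁻¹ ^ (2 * p + 1) * L ^ (2 * p + 1) = (L / (8 * κ)) ^ (2 * p + 1) := by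
          rw [← mul_rpow (by positivity) (by linarith), inv_mul_eq_div]
      _ ≤ ((D : ℝ) / 2) ^ (2 * p + 1) :=
          rpow_le_rpow (div_nonneg (by linarith) (by positivity)) hLD (by positivity)
      _ ≤ _ := half_rpow_le_sum_range_succ_rpow (by positivity) D
  have hbias : 0 ≤ Q ^ 2 * exp (-(2 * κ) * ((D : ℝ) + 1)) := by positivity
  unfold risk; nlinarith [sq_nonneg σ]

lemma rpow_mul_le_risk (hp : 0 ≤ p) (hκ : 0 < κ) (hσ : σ = exp (-L)) (hL : 4 * κ ≤ L)
    (hsmall : (8 * κ)⁻¹ ^ (2 * p + 1) * (L ^ (2 * p + 1) * exp (-L)) ≤ Q ^ 2) (D : ℕ) :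
    (8 * κ)⁻¹ ^ (2 * p + 1) * (σ ^ 2 * L ^ (2 * p + 1)) ≤ risk p κ Q σ D := by
  rcases le_or_gt (2 * κ * (D + 1)) L with hD | hD
  · have hσ0 : 0 ≤ σ := hσ ▸ (exp_pos _).le
    calc (8 * κ)⁻¹ ^ (2 * p + 1) * (σ ^ 2 * L ^ (2 * p + 1))
        = σ * ((8 * κ)⁻¹ ^ (2 * p + 1) * (L ^ (2 * p + 1) * exp (-L))) := by rw [← hσ]; ring
      _ ≤ Q ^ 2 * σ := by rw [mul_comm _ σ]; gcongr
      _ ≤ risk p κ Q σ D := mul_le_risk_of_le hσ hD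
  · linarith [rpow_mul_le_risk_of_lt (Q := Q) (σ := σ) hp hκ hL hD]

lemma risk_ceil_le (hp : 0 ≤ p) (hκ : 0 < κ) (hσ : σ = exp (-L)) (hL : 1 ≤ L) :
    risk p κ Q σ ⌈L / κ⌉₊ ≤ (Q ^ 2 + (κ⁻¹ + 1) ^ (2 * p + 1)) * (σ ^ 2 * L ^ (2 * p + 1)) := by
  set D := ⌈L / κ⌉₊
  have hD : L / κ ≤ D := Nat.le_ceil _
  have hD' : (D : ℝ) ≤ (κ⁻¹ + 1) * L := by
    have hceil : (D : ℝ) < L / κ + 1 := Nat.ceil_lt_add_one (div_nonneg (by linarith) hκ.le)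
    rw [add_mul, inv_mul_eq_div]; linarith
  have hbias : exp (-(2 * κ) * ((D : ℝ) + 1)) ≤ σ ^ 2 := by
    have hLD : L ≤ κ * D := (div_le_iff₀' hκ).1 hD
    rw [hσ, ← exp_nat_mul, exp_le_exp]; push_cast; nlinarith
  have hvar : ∑ j ∈ range D, ((j : ℝ) + 1) ^ (2 * p) ≤ (κ⁻¹ + 1) ^ (2 * p + 1) * L ^ (2 * p + 1) :=
    calc _ ≤ (D : ℝ) ^ (2 * p + 1) := sum_range_succ_rpow_le (by positivity) D
      _ ≤ ((κ⁻¹ + 1) * L) ^ (2 * p + 1) := by gcongr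
      _ = _ := mul_rpow (by positivity) (by linarith)
  have hL1 : 1 ≤ L ^ (2 * p + 1) := one_le_rpow hL (by positivity)
  unfold risk; nlinarith [sq_nonneg σ, sq_nonneg Q, mul_nonneg (sq_nonneg Q) (sq_nonneg σ)]

end

end TruncatedSeries

open TruncatedSeries in
/-- for analytic smoothness `a_j = e^{κj}` and a moderately ill-posed
operator `s_j = j^{−p}`, the best truncated-series squared risk behaves like
`σ² (log(1/σ))^{2p+1}` as `σ → 0`, up to constants. -/
theorem rate_analytic_moderate
    (p κ Q : ℝ) (hp : 0 < p) (hκ : 0 < κ) (hQ : 0 < Q) :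
    ∃ c C σ₀ : ℝ, 0 < c ∧ c ≤ C ∧ 0 < σ₀ ∧
      ∀ σ : ℝ, 0 < σ → σ < σ₀ →
        c * (σ ^ 2 * (Real.log (1 / σ)) ^ (2 * p + 1))
          ≤ (⨅ D : ℕ, (Q ^ 2 * Real.exp (-(2 * κ) * ((D : ℝ) + 1))
              + σ ^ 2 * ∑ j ∈ Finset.range D, ((j : ℝ) + 1) ^ (2 * p))) ∧
        (⨅ D : ℕ, (Q ^ 2 * Real.exp (-(2 * κ) * ((D : ℝ) + 1))
              + σ ^ 2 * ∑ j ∈ Finset.range D, ((j : ℝ) + 1) ^ (2 * p)))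
          ≤ C * (σ ^ 2 * (Real.log (1 / σ)) ^ (2 * p + 1)) := by
  set c := (8 * κ)⁻¹ ^ (2 * p + 1)
  have hc : 0 < c := rpow_pos_of_pos (by positivity) _
  have hsmall : ∀ᶠ L in atTop, c * (L ^ (2 * p + 1) * exp (-L)) < Q ^ 2 := by
    have := (tendsto_rpow_mul_exp_neg_mul_atTop_nhds_zero (2 * p + 1) 1 one_pos).const_mul c
    simp only [neg_one_mul, mul_zero] at this
    exact this.eventually_lt_const (by positivity)
  obtain ⟨t₀, ht₀⟩ :=
    (hsmall.and ((eventually_ge_atTop 1).and (eventually_ge_atTop (4 * κ)))).exists_forall_of_atTop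
  refine ⟨c, Q ^ 2 + (κ⁻¹ + 1) ^ (2 * p + 1), exp (-t₀), hc, ?_, exp_pos _, fun σ hσ hσ₀ ↦ ?_⟩
  · have hcC : c ≤ (κ⁻¹ + 1) ^ (2 * p + 1) :=
      rpow_le_rpow (by positivity) (by rw [mul_inv]; nlinarith [inv_pos.2 hκ]) (by positivity)
    linarith [sq_nonneg Q]
  set L := log (1 / σ)
  have hσL : σ = exp (-L) := by simp only [L, one_div, log_inv, neg_neg, exp_log hσ]
  obtain ⟨hsmallL, hL1, hLκ⟩ := ht₀ L (by rw [hσL, exp_lt_exp] at hσ₀; linarith)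
  have hbdd : BddBelow (Set.range (risk p κ Q σ)) := ⟨0, by rintro _ ⟨D, rfl⟩; exact risk_nonneg D⟩
  exact ⟨le_ciInf (rpow_mul_le_risk hp.le hκ hσL hLκ hsmallL.le),
    (ciInf_le hbdd _).trans (risk_ceil_le hp.le hκ hσL hL1)⟩
end
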